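/- arXiv:2507.19456 — 6 statements merged into one kernel-verified Lean document; each statement's English description precedes it below -/
import Mathlib

section
/- For every integer t ≥ 2 and every integer n ≥ t, every edge-coloring of K_{n,n} using at most ⌊n/t⌋ colors contains a copy of K_{2,t} with no odd color class; consequently r_odd(K_{n,n}, K_{2,t}) > n/t. -/
open Finset

/-- The edge set of a copy of `K_{2,t}` in `K_{n,n}`: two vertices in one part and `t`
vertices in the other part, together with all edges between them.  An edge of `K_{n,n}`
is a pair `(x, y)` with `x` in the first part and `y` in the second part. -/
def isK2tCopy (n t : ℕ) (E : Finset (Fin n × Fin n)) : Prop :=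
  (∃ P S : Finset (Fin n), P.card = 2 ∧ S.card = t ∧ E = P ×ˢ S) ∨
  (∃ P S : Finset (Fin n), P.card = 2 ∧ S.card = t ∧ E = S ×ˢ P)

/-- Under an edge-coloring `c`, the copy with edge set `E` has an odd color class. -/
def hasOddColorClass {α : Type*} [DecidableEq α] {N : ℕ} (c : α → Fin N)
    (E : Finset α) : Prop :=
  ∃ i : Fin N, Odd (E.filter fun e => c e = i).card

/-- The odd Ramsey number `r_odd(K_{n,n}, K_{2,t})`. -/
noncomputable def oddRamseyK2t (n t : ℕ) : ℕ :=
  sInf {N : ℕ | ∃ c : Fin n × Fin n → Fin N,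
    ∀ E : Finset (Fin n × Fin n), isK2tCopy n t E → hasOddColorClass c E}

/-!
Fix a colouring of `K_{n,n}` with `N ≤ n / t` colours. In each row `x` the colours `c (x, y)`
have at least `n² / N ≥ t n` coinciding ordered pairs `(y, z)`, by Cauchy–Schwarz over the
colour classes. Summing over the `n` rows and counting the other way round, some pair of
columns `y ≠ z` agrees in at least `t` rows `S`, since otherwise the total would be at most
`n (n + (n - 1) (t - 1)) < t n²`. The copy `S × {y, z}` of `K_{2,t}` then meets every colour
class in pairs of edges `(x, y), (x, z)`, so it has no odd colour class.
-/

section Coincidences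

variable {α β : Type*} [Fintype α] [Fintype β] [DecidableEq β]

lemma card_filter_apply_eq_apply (f : α → β) :
    #{p : α × α | f p.1 = f p.2} = ∑ b, #{a | f a = b} ^ 2 := by
  rw [card_eq_sum_card_fiberwise (f := fun p : α × α => f p.1) (t := univ) fun _ _ => mem_univ _]
  refine sum_congr rfl fun b _ => ?_
  rw [sq, ← card_product]
  congr 1
  ext ⟨a, a'⟩
  simp only [mem_filter, mem_univ, true_and, mem_product]
  constructor
  · rintro ⟨h, rfl⟩
    exact ⟨rfl, h.symm⟩
  · rintro ⟨rfl, h⟩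
    exact ⟨h.symm, rfl⟩

lemma card_sq_le_card_mul_card_filter_apply_eq_apply (f : α → β) :
    Fintype.card α ^ 2 ≤ Fintype.card β * #{p : α × α | f p.1 = f p.2} := by
  rw [card_filter_apply_eq_apply, ← card_univ (α := α),
    card_eq_sum_card_fiberwise (f := f) (t := univ) fun _ _ => mem_univ _, ← card_univ]
  exact sq_sum_le_card_mul_sum_sq

end Coincidences

lemma mul_mul_add_sub_mul_sub_lt_mul_sq {m n N t : ℕ} (ht : 2 ≤ t) (hm : 0 < m) (hmn : m ≤ n)
    (htN : t * N ≤ m) : N * (n * (m + (n - 1) * (t - 1))) < m * n ^ 2 := by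
  obtain ⟨s, rfl⟩ : ∃ s, t = s + 2 := ⟨t - 2, by omega⟩
  obtain ⟨k, rfl⟩ : ∃ k, n = k + 1 := ⟨n - 1, by omega⟩
  simp only [Nat.add_sub_cancel, show s + 2 - 1 = s + 1 by omega]
  have hNm : N < m := by nlinarith
  have hrow : N * (m + k * (s + 1)) < m * (k + 1) := by
    nlinarith [Nat.mul_le_mul_left k htN, Nat.mul_le_mul_left N hmn]
  calc N * ((k + 1) * (m + k * (s + 1))) = (k + 1) * (N * (m + k * (s + 1))) := by ring
    _ < (k + 1) * (m * (k + 1)) := by gcongr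
    _ = m * (k + 1) ^ 2 := by ring

lemma exists_ne_le_card_filter_apply_eq_apply {X Y C : Type*} [Fintype X] [Fintype Y]
    [Fintype C] [DecidableEq C] (c : X × Y → C) {t : ℕ} (ht : 2 ≤ t)
    (hX : 0 < Fintype.card X) (hXY : Fintype.card X ≤ Fintype.card Y)
    (htC : t * Fintype.card C ≤ Fintype.card X) :
    ∃ y z, y ≠ z ∧ t ≤ #{x | c (x, y) = c (x, z)} := by
  classical
  by_contra! hsmall
  set m := Fintype.card X
  set n := Fintype.card Y
  set N := Fintype.card C
  have hlower : m * n ^ 2 ≤ N * ∑ p : Y × Y, #{x | c (x, p.1) = c (x, p.2)} :=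
    calc m * n ^ 2 = ∑ _x : X, n ^ 2 := by simp [m]
      _ ≤ ∑ x : X, N * #{p : Y × Y | c (x, p.1) = c (x, p.2)} := sum_le_sum fun x _ =>
          card_sq_le_card_mul_card_filter_apply_eq_apply fun y => c (x, y)
      _ = N * ∑ p : Y × Y, #{x | c (x, p.1) = c (x, p.2)} := by
          rw [← mul_sum]
          congr 1
          exact sum_card_bipartiteAbove_eq_sum_card_bipartiteBelow _
  have hcolumn (y : Y) : ∑ z, #{x | c (x, y) = c (x, z)} ≤ m + (n - 1) * (t - 1) := by
    rw [← sum_erase_add _ _ (mem_univ y), filter_true_of_mem fun _ _ => rfl, card_univ]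
    have hrest : ∑ z ∈ univ.erase y, #{x | c (x, y) = c (x, z)} ≤ (n - 1) * (t - 1) := by
      have := sum_le_card_nsmul (univ.erase y) _ (t - 1) fun z hz =>
        Nat.le_pred_of_lt (hsmall y z (ne_of_mem_erase hz).symm)
      rwa [card_erase_of_mem (mem_univ y), card_univ] at this
    omega
  have hupper : ∑ p : Y × Y, #{x | c (x, p.1) = c (x, p.2)} ≤ n * (m + (n - 1) * (t - 1)) := by
    rw [Fintype.sum_prod_type]
    simpa using sum_le_sum fun y (_ : y ∈ univ) => hcolumn y
  exact (mul_mul_add_sub_mul_sub_lt_mul_sq ht hX hXY htC).not_ge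
    (hlower.trans (Nat.mul_le_mul_left N hupper))

lemma not_hasOddColorClass_product_pair {X Y : Type*} [DecidableEq X] [DecidableEq Y] {N : ℕ}
    (c : X × Y → Fin N) (S : Finset X) {y z : Y} (hyz : y ≠ z)
    (hS : ∀ x ∈ S, c (x, y) = c (x, z)) : ¬ hasOddColorClass c (S ×ˢ {y, z}) := by
  rintro ⟨i, hodd⟩
  have hcard : #{e ∈ S ×ˢ {y, z} | c e = i} = 2 * #{x ∈ S | c (x, y) = i} := by
    rw [card_filter, card_filter, sum_product, mul_sum]
    refine sum_congr rfl fun x hx => ?_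
    rw [sum_pair hyz, ← hS x hx, two_mul]
  exact Nat.not_odd_iff_even.2 (hcard ▸ even_two_mul _) hodd

theorem exists_isK2tCopy_not_hasOddColorClass {n t N : ℕ} (ht : 2 ≤ t) (hn : t ≤ n)
    (hN : N ≤ n / t) (c : Fin n × Fin n → Fin N) :
    ∃ E, isK2tCopy n t E ∧ ¬ hasOddColorClass c E := by
  have htN : t * Fintype.card (Fin N) ≤ Fintype.card (Fin n) := by
    simpa [mul_comm] using (Nat.le_div_iff_mul_le (by omega)).1 hN
  obtain ⟨y, z, hyz, hagree⟩ := exists_ne_le_card_filter_apply_eq_apply c ht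
    (by rw [Fintype.card_fin]; omega) le_rfl htN
  obtain ⟨S, hSagree, hS⟩ := exists_subset_card_eq hagree
  exact ⟨S ×ˢ {y, z}, Or.inr ⟨{y, z}, S, card_pair hyz, hS, rfl⟩,
    not_hasOddColorClass_product_pair c S hyz fun x hx => (mem_filter.1 (hSagree hx)).2⟩

lemma hasOddColorClass_of_injective {α : Type*} [DecidableEq α] {N : ℕ} {c : α → Fin N}
    (hc : Function.Injective c) {E : Finset α} (hE : E.Nonempty) : hasOddColorClass c E := by
  obtain ⟨e, he⟩ := hE
  have hclass : E.filter (fun e' => c e' = c e) = {e} := by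
    ext e'
    simp only [mem_filter, mem_singleton, hc.eq_iff]
    constructor
    · exact And.right
    · rintro rfl
      exact ⟨he, rfl⟩
  exact ⟨c e, by rw [hclass, card_singleton]; exact odd_one⟩

lemma isK2tCopy.nonempty {n t : ℕ} {E : Finset (Fin n × Fin n)} (hE : isK2tCopy n t E)
    (ht : 0 < t) : E.Nonempty := by
  rcases hE with ⟨P, S, hP, hS, rfl⟩ | ⟨P, S, hP, hS, rfl⟩ <;>
    · rw [← card_pos, card_product, hP, hS]
      positivity

theorem exists_coloring_oddRamseyK2t (n : ℕ) {t : ℕ} (ht : 0 < t) :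
    ∃ c : Fin n × Fin n → Fin (oddRamseyK2t n t),
      ∀ E, isK2tCopy n t E → hasOddColorClass c E :=
  Nat.sInf_mem (s := {N | ∃ c : Fin n × Fin n → Fin N,
      ∀ E, isK2tCopy n t E → hasOddColorClass c E}) ⟨n * n, finProdFinEquiv, fun _ hE =>
    hasOddColorClass_of_injective finProdFinEquiv.injective (hE.nonempty ht)⟩

/-- For every `t ≥ 2` and every `n ≥ t`, every edge-coloring of `K_{n,n}` using at most
`⌊n/t⌋` colors contains a copy of `K_{2,t}` with no odd color class; consequently
`r_odd(K_{n,n}, K_{2,t}) > n/t`. -/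
theorem stmt1 (t n : ℕ) (ht : 2 ≤ t) (hn : t ≤ n) :
    (∀ N : ℕ, N ≤ n / t → ∀ c : Fin n × Fin n → Fin N,
      ∃ E : Finset (Fin n × Fin n), isK2tCopy n t E ∧ ¬ hasOddColorClass c E) ∧
    (n : ℝ) / t < (oddRamseyK2t n t : ℝ) := by
  refine ⟨fun N hN c => exists_isK2tCopy_not_hasOddColorClass ht hn hN c, ?_⟩
  obtain ⟨c, hc⟩ := exists_coloring_oddRamseyK2t n (by omega : 0 < t)
  have hlt : n / t < oddRamseyK2t n t := by
    by_contra! hle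
    obtain ⟨E, hE, hnot⟩ := exists_isK2tCopy_not_hasOddColorClass ht hn hle c
    exact hnot (hc E hE)
  rw [div_lt_iff₀ (by positivity)]
  exact_mod_cast (Nat.div_lt_iff_lt_mul (by omega)).1 hlt
end

section
/- In the auxiliary hypergraph H1 built from K_{n,n} (with t ≥ 2), every conflict with respect to H1 has size at least 3; that is, no matching of exactly two tiles of H1 is a conflict. -/
open Finset

/-- The vertex set of `K_{n,n}`: the disjoint union of the parts `X` and `Y`,
each a copy of `Fin n`. -/
abbrev Vtx (n : ℕ) := Fin n ⊕ Fin n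

/-- The color set `N₁`, of size `⌈n/t⌉`. -/
abbrev Col1 (n t : ℕ) := Fin ((n + t - 1) / t)

/-- The vertex set of the auxiliary hypergraph `H₁`: the set `U` of (2-element) subsets of
`X ∪ Y` (encoded as unordered pairs, i.e. `Sym2`), together with `V = ⋃_{i ∈ N₁} V_i`,
where each `V_i` is a copy of `X ∪ Y` (encoded as a pair of a color and a vertex). -/
abbrev VH1 (n t : ℕ) := Sym2 (Vtx n) ⊕ (Col1 n t × Vtx n)

/-- The vertex set (as a subset of `V(H₁)`) of the tile `e_{S,i}`, where the copy `S` of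
`K_{t+1,t+1} − (t+1)K₂` is described by injections `a b : Fin (t+1) → Fin n` listing its
vertices in `X` and in `Y` respectively, the removed perfect matching consisting of the
pairs `(a j, b j)`: it consists of the copies `v^i` of the vertices `v` of `S`, the edges
of `S` (the cross pairs `{a j, b j'}` with `j ≠ j'`), and all 2-element subsets of
`V(S) ∩ X` and of `V(S) ∩ Y`. -/
def tileVerts (n t : ℕ) (i : Col1 n t) (a b : Fin (t + 1) → Fin n) : Set (VH1 n t) :=
  {v | (∃ j, v = Sum.inr (i, Sum.inl (a j))) ∨
       (∃ j, v = Sum.inr (i, Sum.inr (b j))) ∨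
       (∃ j j', j ≠ j' ∧ v = Sum.inl s(Sum.inl (a j), Sum.inr (b j'))) ∨
       (∃ j j', j ≠ j' ∧ v = Sum.inl s(Sum.inl (a j), Sum.inl (a j'))) ∨
       (∃ j j', j ≠ j' ∧ v = Sum.inl s(Sum.inr (b j), Sum.inr (b j')))}

/-- `T` is a tile of `H₁`, i.e. an edge `e_{S,i}` for some color `i ∈ N₁` and some copy
`S = S' − M` of `K_{t+1,t+1}` minus a perfect matching. -/
def IsTile1 (n t : ℕ) (T : Finset (VH1 n t)) : Prop :=
  ∃ (i : Col1 n t) (a b : Fin (t + 1) → Fin n),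
    Function.Injective a ∧ Function.Injective b ∧
      (T : Set (VH1 n t)) = tileVerts n t i a b

/-- The colored edges of `K_{n,n}` corresponding to a tile `T`: pairs `((x,y), i)` such
that the edge `xy` (with `x ∈ X`, `y ∈ Y`) lies in `T` and `i` is the color of `T`. -/
def coloredEdges (n t : ℕ) (T : Finset (VH1 n t)) : Set ((Fin n × Fin n) × Col1 n t) :=
  {ec | Sum.inl s(Sum.inl ec.1.1, Sum.inr ec.1.2) ∈ T ∧ ∃ v : Vtx n, Sum.inr (ec.2, v) ∈ T}

/-- `E_C`: the set of colored edges of `K_{n,n}` corresponding to a set `C` of tiles. -/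
def matchColoredEdges (n t : ℕ) (C : Finset (Finset (VH1 n t))) :
    Set ((Fin n × Fin n) × Col1 n t) :=
  ⋃ T ∈ C, coloredEdges n t T

/-- The edge set of the complete bipartite graph between `P` and `S`, where if
`side = true` then `P ⊆ X` and `S ⊆ Y`, and if `side = false` then `S ⊆ X` and `P ⊆ Y`. -/
def copyEdges (n : ℕ) (side : Bool) (P S : Finset (Fin n)) : Finset (Fin n × Fin n) :=
  if side then P ×ˢ S else S ×ˢ P

/-- The copy of `K_{2,r}` with 2-side `P` (on the side indicated by `side`) and `r`-side
`S` (so `r = S.card`) is a *bad* copy with respect to the set `F` of colored edges: all of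
its edges are colored by `F`, and no color appears on an odd number of its edges. -/
def IsBadCopy (n t : ℕ) (F : Set ((Fin n × Fin n) × Col1 n t)) (side : Bool)
    (P S : Finset (Fin n)) : Prop :=
  P.card = 2 ∧ S.Nonempty ∧
    (∀ e ∈ copyEdges n side P S, ∃ i : Col1 n t, (e, i) ∈ F) ∧
    ∀ i : Col1 n t, Even {e : Fin n × Fin n | e ∈ copyEdges n side P S ∧ (e, i) ∈ F}.ncard

/-- A matching of tiles: a collection of pairwise disjoint tiles. -/
def IsMatching (n t : ℕ) (tile : Finset (VH1 n t) → Prop)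
    (M : Finset (Finset (VH1 n t))) : Prop :=
  (∀ T ∈ M, tile T) ∧ ∀ T ∈ M, ∀ T' ∈ M, T ≠ T' → Disjoint T T'

/-- A conflict with respect to the tile system `tile`: a matching `C` of at least two
tiles such that `E_C` contains a bad copy `K` of `K_{2,r}` for some `r ≥ 1` using at least
one edge from each tile of `C`. -/
def IsConflictWrt (n t : ℕ) (tile : Finset (VH1 n t) → Prop)
    (C : Finset (Finset (VH1 n t))) : Prop :=
  2 ≤ C.card ∧ IsMatching n t tile C ∧
    ∃ (side : Bool) (P S : Finset (Fin n)),
      IsBadCopy n t (matchColoredEdges n t C) side P S ∧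
      ∀ T ∈ C, ∃ e ∈ copyEdges n side P S, ∃ i : Col1 n t, (e, i) ∈ coloredEdges n t T


section AuxStmt6


/-- If two finsets have even total size and their symmetric difference has at most one
element, they are equal. -/
lemma aux_eq_of_even_card_add {α : Type*} [DecidableEq α] (s t : Finset α)
    (h : Even (s.card + t.card)) (h1 : ((s \ t) ∪ (t \ s)).card ≤ 1) : s = t := by
  have hd : Disjoint (s \ t) (t \ s) := disjoint_sdiff_sdiff
  have hu := Finset.card_union_of_disjoint hd
  have e1 := Finset.card_sdiff_add_card_inter s t
  have e2 := Finset.card_sdiff_add_card_inter t s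
  rw [Finset.inter_comm] at e2
  obtain ⟨k, hk⟩ := h
  have hc : ((s \ t) ∪ (t \ s)).card = 0 := by omega
  rw [Finset.card_eq_zero, Finset.union_eq_empty, Finset.sdiff_eq_empty_iff_subset,
    Finset.sdiff_eq_empty_iff_subset] at hc
  exact Finset.Subset.antisymm hc.1 hc.2

/-- Abstract core combinatorial lemma: two disjoint "tiles" cannot support a bad copy
of `K_{2,r}` that touches both of them. -/
lemma aux_core_two_tiles {n : ℕ} {V ι : Type*}
    (T1 T2 : Finset V) (hdisj : Disjoint T1 T2)
    (i1 i2 : ι) (P1 S1 P2 S2 : Set (Fin n))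
    (pairP pairS : Fin n → Fin n → V) (vtxS : ι → Fin n → V)
    (F1 F2 : Set ((Fin n × Fin n) × ι))
    (hF1 : ∀ p s c, ((p, s), c) ∈ F1 → p ∈ P1 ∧ s ∈ S1 ∧ c = i1)
    (hF2 : ∀ p s c, ((p, s), c) ∈ F2 → p ∈ P2 ∧ s ∈ S2 ∧ c = i2)
    (hpP1 : ∀ p p', p ∈ P1 → p' ∈ P1 → p ≠ p' → pairP p p' ∈ T1)
    (hpP2 : ∀ p p', p ∈ P2 → p' ∈ P2 → p ≠ p' → pairP p p' ∈ T2)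
    (hpS1 : ∀ s s', s ∈ S1 → s' ∈ S1 → s ≠ s' → pairS s s' ∈ T1)
    (hpS2 : ∀ s s', s ∈ S2 → s' ∈ S2 → s ≠ s' → pairS s s' ∈ T2)
    (hv1 : ∀ s ∈ S1, vtxS i1 s ∈ T1)
    (hv2 : ∀ s ∈ S2, vtxS i2 s ∈ T2)
    (P S : Finset (Fin n)) (hP : P.card = 2)
    (hcover : ∀ p ∈ P, ∀ s ∈ S, ∃ i, ((p, s), i) ∈ F1 ∨ ((p, s), i) ∈ F2)
    (hparity : ∀ i, Even {e : Fin n × Fin n |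
        e.1 ∈ P ∧ e.2 ∈ S ∧ (((e.1, e.2), i) ∈ F1 ∨ ((e.1, e.2), i) ∈ F2)}.ncard)
    (hT1 : ∃ p ∈ P, ∃ s ∈ S, ∃ i, ((p, s), i) ∈ F1)
    (hT2 : ∃ p ∈ P, ∃ s ∈ S, ∃ i, ((p, s), i) ∈ F2) : False := by
  classical
  obtain ⟨p1, p2, hpne, hPeq⟩ := Finset.card_eq_two.1 hP
  have K1 : ¬ ((p1 ∈ P1 ∧ p2 ∈ P1) ∧ (p1 ∈ P2 ∧ p2 ∈ P2)) := by
    rintro ⟨⟨h1, h2⟩, h3, h4⟩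
    exact (Finset.disjoint_left.1 hdisj (hpP1 _ _ h1 h2 hpne)) (hpP2 _ _ h3 h4 hpne)
  have K2 : ∀ s s', s ∈ S1 → s ∈ S2 → s' ∈ S1 → s' ∈ S2 → s = s' := by
    intro s s' h1 h2 h3 h4
    by_contra hne
    exact (Finset.disjoint_left.1 hdisj (hpS1 _ _ h1 h3 hne)) (hpS2 _ _ h2 h4 hne)
  have hp1P : p1 ∈ P := by simp [hPeq]
  have hp2P : p2 ∈ P := by simp [hPeq]
  by_cases hcol : i1 = i2
  · -- same color: the two tiles are vertex-disjoint as graphs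
    have hSdisj : ∀ s, s ∈ S1 → s ∈ S2 → False := by
      intro s h1 h2
      have hm1 := hv1 s h1
      have hm2 := hv2 s h2
      rw [← hcol] at hm2
      exact (Finset.disjoint_left.1 hdisj hm1) hm2
    obtain ⟨p, hp, s, hs, i, hi⟩ := hT1
    obtain ⟨q, hq, s', hs', i', hi'⟩ := hT2
    have hsS1 : s ∈ S1 := (hF1 _ _ _ hi).2.1
    have hs'S2 : s' ∈ S2 := (hF2 _ _ _ hi').2.1
    have colP1 : ∀ r ∈ P, r ∈ P1 := by
      intro r hr
      obtain ⟨j, hj | hj⟩ := hcover r hr s hs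
      · exact (hF1 _ _ _ hj).1
      · exact absurd (hF2 _ _ _ hj).2.1 (fun h => hSdisj s hsS1 h)
    have colP2 : ∀ r ∈ P, r ∈ P2 := by
      intro r hr
      obtain ⟨j, hj | hj⟩ := hcover r hr s' hs'
      · exact absurd (hF1 _ _ _ hj).2.1 (fun h => hSdisj s' h hs'S2)
      · exact (hF2 _ _ _ hj).1
    exact K1 ⟨⟨colP1 p1 hp1P, colP1 p2 hp2P⟩, colP2 p1 hp1P, colP2 p2 hp2P⟩
  · -- different colors
    have rowEq : ∀ (F : Set ((Fin n × Fin n) × ι)) (i : ι),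
        {e : Fin n × Fin n | e.1 ∈ P ∧ e.2 ∈ S ∧ ((e.1, e.2), i) ∈ F}.ncard
          = (S.filter fun s => ((p1, s), i) ∈ F).card
            + (S.filter fun s => ((p2, s), i) ∈ F).card := by
      intro F i
      have hset : {e : Fin n × Fin n | e.1 ∈ P ∧ e.2 ∈ S ∧ ((e.1, e.2), i) ∈ F}
          = ↑(((S.filter fun s => ((p1, s), i) ∈ F).image fun s => (p1, s))
              ∪ ((S.filter fun s => ((p2, s), i) ∈ F).image fun s => (p2, s))) := by
        ext ⟨x, y⟩
        simp only [Set.mem_setOf_eq, Finset.coe_union, Set.mem_union, Finset.coe_image,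
          Set.mem_image, Finset.mem_coe, Finset.mem_filter, hPeq, Finset.mem_insert,
          Finset.mem_singleton]
        constructor
        · rintro ⟨(rfl | rfl), hy, hF⟩
          · exact Or.inl ⟨y, ⟨hy, hF⟩, rfl⟩
          · exact Or.inr ⟨y, ⟨hy, hF⟩, rfl⟩
        · rintro (⟨s, ⟨hs, hF⟩, h⟩ | ⟨s, ⟨hs, hF⟩, h⟩)
          · injection h with h1 h2
            subst h1
            subst h2
            exact ⟨Or.inl rfl, hs, hF⟩
          · injection h with h1 h2
            subst h1
            subst h2
            exact ⟨Or.inr rfl, hs, hF⟩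
      have hinj1 : Function.Injective (fun s : Fin n => (p1, s)) :=
        fun x y hxy => by simpa using congrArg Prod.snd hxy
      have hinj2 : Function.Injective (fun s : Fin n => (p2, s)) :=
        fun x y hxy => by simpa using congrArg Prod.snd hxy
      rw [hset, Set.ncard_coe_finset]
      rw [Finset.card_union_of_disjoint, Finset.card_image_of_injective _ hinj1,
        Finset.card_image_of_injective _ hinj2]
      rw [Finset.disjoint_left]
      rintro e he he'
      simp only [Finset.mem_image] at he he'
      obtain ⟨s, -, rfl⟩ := he
      obtain ⟨s', -, h⟩ := he'
      have h2 : p2 = p1 := congrArg Prod.fst h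
      exact hpne h2.symm
    have rows : ∀ (F F' : Set ((Fin n × Fin n) × ι)) (ia ib : ι)
        (Sa Sb : Set (Fin n)),
        (∀ p s c, ((p, s), c) ∈ F → s ∈ Sa ∧ c = ia) →
        (∀ p s c, ((p, s), c) ∈ F' → s ∈ Sb ∧ c = ib) →
        ia ≠ ib →
        (∀ s s', s ∈ Sa → s ∈ Sb → s' ∈ Sa → s' ∈ Sb → s = s') →
        (∀ p ∈ P, ∀ s ∈ S, ∃ i, ((p, s), i) ∈ F ∨ ((p, s), i) ∈ F') →
        Even {e : Fin n × Fin n |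
          e.1 ∈ P ∧ e.2 ∈ S ∧ (((e.1, e.2), ia) ∈ F ∨ ((e.1, e.2), ia) ∈ F')}.ncard →
        (S.filter fun s => ((p1, s), ia) ∈ F) = (S.filter fun s => ((p2, s), ia) ∈ F) := by
      intro F F' ia ib Sa Sb hFa hFb hab hK hcov hpar
      have hseteq : {e : Fin n × Fin n |
          e.1 ∈ P ∧ e.2 ∈ S ∧ (((e.1, e.2), ia) ∈ F ∨ ((e.1, e.2), ia) ∈ F')}
          = {e : Fin n × Fin n | e.1 ∈ P ∧ e.2 ∈ S ∧ ((e.1, e.2), ia) ∈ F} := by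
        ext e
        simp only [Set.mem_setOf_eq]
        refine and_congr_right fun _ => and_congr_right fun _ => ⟨?_, Or.inl⟩
        rintro (h | h)
        · exact h
        · exact absurd (hFb _ _ _ h).2 hab
      rw [hseteq, rowEq F ia] at hpar
      set R1 := S.filter fun s => ((p1, s), ia) ∈ F with hR1
      set R2 := S.filter fun s => ((p2, s), ia) ∈ F with hR2
      apply aux_eq_of_even_card_add _ _ hpar
      have key : ∀ x ∈ (R1 \ R2) ∪ (R2 \ R1), x ∈ Sa ∧ x ∈ Sb := by
        intro x hx
        rw [Finset.mem_union, Finset.mem_sdiff, Finset.mem_sdiff] at hx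
        obtain ⟨h1, h2⟩ | ⟨h1, h2⟩ := hx
        · rw [hR1, Finset.mem_filter] at h1
          obtain ⟨hxS, hxF⟩ := h1
          refine ⟨(hFa _ _ _ hxF).1, ?_⟩
          obtain ⟨i, hi | hi⟩ := hcov p2 hp2P x hxS
          · obtain rfl := (hFa _ _ _ hi).2
            exact absurd (Finset.mem_filter.2 ⟨hxS, hi⟩) h2
          · exact (hFb _ _ _ hi).1
        · rw [hR2, Finset.mem_filter] at h1
          obtain ⟨hxS, hxF⟩ := h1
          refine ⟨(hFa _ _ _ hxF).1, ?_⟩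
          obtain ⟨i, hi | hi⟩ := hcov p1 hp1P x hxS
          · obtain rfl := (hFa _ _ _ hi).2
            exact absurd (Finset.mem_filter.2 ⟨hxS, hi⟩) h2
          · exact (hFb _ _ _ hi).1
      apply Finset.card_le_one.2
      intro s hs s' hs'
      exact hK s s' (key s hs).1 (key s hs).2 (key s' hs').1 (key s' hs').2
    have hrow1 := rows F1 F2 i1 i2 S1 S2
      (fun p s c h => ⟨(hF1 p s c h).2.1, (hF1 p s c h).2.2⟩)
      (fun p s c h => ⟨(hF2 p s c h).2.1, (hF2 p s c h).2.2⟩)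
      hcol K2 hcover (hparity i1)
    have hcover' : ∀ p ∈ P, ∀ s ∈ S, ∃ i, ((p, s), i) ∈ F2 ∨ ((p, s), i) ∈ F1 := by
      intro p hp s hs
      obtain ⟨i, hi⟩ := hcover p hp s hs
      exact ⟨i, hi.symm⟩
    have hpar2 : Even {e : Fin n × Fin n |
        e.1 ∈ P ∧ e.2 ∈ S ∧ (((e.1, e.2), i2) ∈ F2 ∨ ((e.1, e.2), i2) ∈ F1)}.ncard := by
      have hseteq : {e : Fin n × Fin n |
          e.1 ∈ P ∧ e.2 ∈ S ∧ (((e.1, e.2), i2) ∈ F2 ∨ ((e.1, e.2), i2) ∈ F1)}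
          = {e : Fin n × Fin n |
          e.1 ∈ P ∧ e.2 ∈ S ∧ (((e.1, e.2), i2) ∈ F1 ∨ ((e.1, e.2), i2) ∈ F2)} := by
        ext e
        simp only [Set.mem_setOf_eq]
        exact and_congr_right fun _ => and_congr_right fun _ => or_comm
      rw [hseteq]
      exact hparity i2
    have hrow2 := rows F2 F1 i2 i1 S2 S1
      (fun p s c h => ⟨(hF2 p s c h).2.1, (hF2 p s c h).2.2⟩)
      (fun p s c h => ⟨(hF1 p s c h).2.1, (hF1 p s c h).2.2⟩)
      (Ne.symm hcol) (fun s s' h1 h2 h3 h4 => K2 s s' h2 h1 h4 h3) hcover' hpar2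
    -- extract both rows from each tile
    have getBoth : ∀ (F : Set ((Fin n × Fin n) × ι)) (ia : ι),
        (∀ p s c, ((p, s), c) ∈ F → c = ia) →
        (S.filter fun s => ((p1, s), ia) ∈ F) = (S.filter fun s => ((p2, s), ia) ∈ F) →
        (∃ p ∈ P, ∃ s ∈ S, ∃ i, ((p, s), i) ∈ F) →
        ∃ s, ((p1, s), ia) ∈ F ∧ ((p2, s), ia) ∈ F := by
      intro F ia hcF hrow hex
      obtain ⟨p, hp, s, hs, i, hi⟩ := hex
      have hia : i = ia := hcF _ _ _ hi
      rw [hia] at hi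
      rw [hPeq, Finset.mem_insert, Finset.mem_singleton] at hp
      rcases hp with rfl | rfl
      · have h1 : s ∈ S.filter fun s => ((p, s), ia) ∈ F := Finset.mem_filter.2 ⟨hs, hi⟩
        have h2 := hrow ▸ h1
        exact ⟨s, hi, (Finset.mem_filter.1 h2).2⟩
      · have h1 : s ∈ S.filter fun s => ((p, s), ia) ∈ F := Finset.mem_filter.2 ⟨hs, hi⟩
        have h2 := hrow.symm ▸ h1
        exact ⟨s, (Finset.mem_filter.1 h2).2, hi⟩
    obtain ⟨s, hs1, hs2⟩ := getBoth F1 i1 (fun p s c h => (hF1 p s c h).2.2) hrow1 hT1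
    obtain ⟨s', hs1', hs2'⟩ := getBoth F2 i2 (fun p s c h => (hF2 p s c h).2.2) hrow2 hT2
    exact K1 ⟨⟨(hF1 _ _ _ hs1).1, (hF1 _ _ _ hs2).1⟩, (hF2 _ _ _ hs1').1, (hF2 _ _ _ hs2').1⟩


/-- Decoding what membership in a tile gives us. -/
lemma aux_tile_decode {n t : ℕ} {T : Finset (VH1 n t)} {i : Col1 n t}
    {a b : Fin (t + 1) → Fin n}
    (hT : (T : Set (VH1 n t)) = tileVerts n t i a b) :
    (∀ x y c, ((x, y), c) ∈ coloredEdges n t T →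
        x ∈ Set.range a ∧ y ∈ Set.range b ∧ c = i) ∧
    (∀ x x', x ∈ Set.range a → x' ∈ Set.range a → x ≠ x' →
        (Sum.inl s(Sum.inl x, Sum.inl x') : VH1 n t) ∈ T) ∧
    (∀ y y', y ∈ Set.range b → y' ∈ Set.range b → y ≠ y' →
        (Sum.inl s(Sum.inr y, Sum.inr y') : VH1 n t) ∈ T) ∧
    (∀ x ∈ Set.range a, (Sum.inr (i, Sum.inl x) : VH1 n t) ∈ T) ∧
    (∀ y ∈ Set.range b, (Sum.inr (i, Sum.inr y) : VH1 n t) ∈ T) := by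
  have hmem : ∀ v : VH1 n t, v ∈ T ↔ v ∈ tileVerts n t i a b := fun v => by
    rw [← Finset.mem_coe, hT]
  refine ⟨?_, ?_, ?_, ?_, ?_⟩
  · intro x y c hc
    obtain ⟨hedge, v, hv⟩ := hc
    rw [hmem] at hedge hv
    simp only [tileVerts, Set.mem_setOf_eq] at hedge hv
    have hxy : x ∈ Set.range a ∧ y ∈ Set.range b := by
      rcases hedge with ⟨j, h⟩ | ⟨j, h⟩ | ⟨j, j', hjj, h⟩ | ⟨j, j', hjj, h⟩ | ⟨j, j', hjj, h⟩
      · simp at h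
      · simp at h
      · rw [Sum.inl.injEq, Sym2.eq_iff] at h
        rcases h with ⟨h1, h2⟩ | ⟨h1, h2⟩
        · rw [Sum.inl.injEq] at h1
          rw [Sum.inr.injEq] at h2
          exact ⟨⟨j, h1.symm⟩, ⟨j', h2.symm⟩⟩
        · simp at h1
      · rw [Sum.inl.injEq, Sym2.eq_iff] at h
        rcases h with ⟨h1, h2⟩ | ⟨h1, h2⟩ <;> simp at h2
      · rw [Sum.inl.injEq, Sym2.eq_iff] at h
        rcases h with ⟨h1, h2⟩ | ⟨h1, h2⟩ <;> simp at h1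
    refine ⟨hxy.1, hxy.2, ?_⟩
    rcases hv with ⟨j, h⟩ | ⟨j, h⟩ | ⟨j, j', hjj, h⟩ | ⟨j, j', hjj, h⟩ | ⟨j, j', hjj, h⟩
    · rw [Sum.inr.injEq, Prod.mk.injEq] at h
      exact h.1
    · rw [Sum.inr.injEq, Prod.mk.injEq] at h
      exact h.1
    · simp at h
    · simp at h
    · simp at h
  · rintro x x' ⟨j, rfl⟩ ⟨j', rfl⟩ hne
    have hjj : j ≠ j' := fun h => hne (by rw [h])
    rw [hmem]
    exact Or.inr (Or.inr (Or.inr (Or.inl ⟨j, j', hjj, rfl⟩)))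
  · rintro y y' ⟨j, rfl⟩ ⟨j', rfl⟩ hne
    have hjj : j ≠ j' := fun h => hne (by rw [h])
    rw [hmem]
    exact Or.inr (Or.inr (Or.inr (Or.inr ⟨j, j', hjj, rfl⟩)))
  · rintro x ⟨j, rfl⟩
    rw [hmem]
    exact Or.inl ⟨j, rfl⟩
  · rintro y ⟨j, rfl⟩
    rw [hmem]
    exact Or.inr (Or.inl ⟨j, rfl⟩)

end AuxStmt6

/-- In the auxiliary hypergraph `H₁` built from `K_{n,n}` (with `t ≥ 2`), every conflict
with respect to `H₁` has size at least 3. -/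
theorem stmt6 (t n : ℕ) (ht : 2 ≤ t) (hn : 1 ≤ n)
    (C : Finset (Finset (VH1 n t))) (hC : IsConflictWrt n t (IsTile1 n t) C) :
    3 ≤ C.card := by
  obtain ⟨hcard, ⟨htiles, hdisjC⟩, side, P, S, ⟨hP2, hSne, hcover, hpar⟩, htouch⟩ := hC
  by_contra hlt
  push_neg at hlt
  have hc2 : C.card = 2 := by omega
  obtain ⟨T1, T2, hneT, hCeq⟩ := Finset.card_eq_two.1 hc2
  subst hCeq
  have hT1C : T1 ∈ ({T1, T2} : Finset (Finset (VH1 n t))) := by simp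
  have hT2C : T2 ∈ ({T1, T2} : Finset (Finset (VH1 n t))) := by simp
  have hd : Disjoint T1 T2 := hdisjC T1 hT1C T2 hT2C hneT
  obtain ⟨i1, a1, b1, -, -, hT1eq⟩ := htiles T1 hT1C
  obtain ⟨i2, a2, b2, -, -, hT2eq⟩ := htiles T2 hT2C
  obtain ⟨ed1, pX1, pY1, vX1, vY1⟩ := aux_tile_decode hT1eq
  obtain ⟨ed2, pX2, pY2, vX2, vY2⟩ := aux_tile_decode hT2eq
  have hmF : ∀ w : (Fin n × Fin n) × Col1 n t,
      w ∈ matchColoredEdges n t {T1, T2} ↔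
        w ∈ coloredEdges n t T1 ∨ w ∈ coloredEdges n t T2 := by
    intro w
    simp [matchColoredEdges]
  cases side with
  | true =>
    have hce : copyEdges n true P S = P ×ˢ S := rfl
    refine aux_core_two_tiles T1 T2 hd i1 i2 (Set.range a1) (Set.range b1)
      (Set.range a2) (Set.range b2)
      (fun x x' => Sum.inl s(Sum.inl x, Sum.inl x'))
      (fun y y' => Sum.inl s(Sum.inr y, Sum.inr y'))
      (fun c y => Sum.inr (c, Sum.inr y))
      (coloredEdges n t T1) (coloredEdges n t T2)
      (fun p s c h => ed1 p s c h) (fun p s c h => ed2 p s c h)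
      pX1 pX2 pY1 pY2 vY1 vY2 P S hP2 ?_ ?_ ?_ ?_
    · intro p hp s hs
      obtain ⟨c, hc⟩ := hcover (p, s) (by rw [hce]; exact Finset.mem_product.2 ⟨hp, hs⟩)
      exact ⟨c, (hmF _).1 hc⟩
    · intro c
      have hseteq : {e : Fin n × Fin n | e.1 ∈ P ∧ e.2 ∈ S ∧
          (((e.1, e.2), c) ∈ coloredEdges n t T1 ∨ ((e.1, e.2), c) ∈ coloredEdges n t T2)}
          = {e : Fin n × Fin n | e ∈ copyEdges n true P S ∧
              (e, c) ∈ matchColoredEdges n t {T1, T2}} := by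
        ext ⟨x, y⟩
        simp only [Set.mem_setOf_eq, hce, Finset.mem_product, hmF, and_assoc]
      rw [hseteq]
      exact hpar c
    · obtain ⟨e, he, c, hc⟩ := htouch T1 hT1C
      obtain ⟨p, s⟩ := e
      rw [hce, Finset.mem_product] at he
      exact ⟨p, he.1, s, he.2, c, hc⟩
    · obtain ⟨e, he, c, hc⟩ := htouch T2 hT2C
      obtain ⟨p, s⟩ := e
      rw [hce, Finset.mem_product] at he
      exact ⟨p, he.1, s, he.2, c, hc⟩
  | false =>
    have hce : copyEdges n false P S = S ×ˢ P := rfl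
    refine aux_core_two_tiles T1 T2 hd i1 i2 (Set.range b1) (Set.range a1)
      (Set.range b2) (Set.range a2)
      (fun y y' => Sum.inl s(Sum.inr y, Sum.inr y'))
      (fun x x' => Sum.inl s(Sum.inl x, Sum.inl x'))
      (fun c x => Sum.inr (c, Sum.inl x))
      {w | ((w.1.2, w.1.1), w.2) ∈ coloredEdges n t T1}
      {w | ((w.1.2, w.1.1), w.2) ∈ coloredEdges n t T2}
      (fun p s c h => ⟨(ed1 s p c h).2.1, (ed1 s p c h).1, (ed1 s p c h).2.2⟩)
      (fun p s c h => ⟨(ed2 s p c h).2.1, (ed2 s p c h).1, (ed2 s p c h).2.2⟩)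
      pY1 pY2 pX1 pX2 vX1 vX2 P S hP2 ?_ ?_ ?_ ?_
    · intro p hp s hs
      obtain ⟨c, hc⟩ := hcover (s, p) (by rw [hce]; exact Finset.mem_product.2 ⟨hs, hp⟩)
      exact ⟨c, (hmF _).1 hc⟩
    · intro c
      have hseteq : {e : Fin n × Fin n | e.1 ∈ P ∧ e.2 ∈ S ∧
          (((e.1, e.2), c) ∈ {w : (Fin n × Fin n) × Col1 n t |
              ((w.1.2, w.1.1), w.2) ∈ coloredEdges n t T1} ∨
           ((e.1, e.2), c) ∈ {w : (Fin n × Fin n) × Col1 n t |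
              ((w.1.2, w.1.1), w.2) ∈ coloredEdges n t T2})}
          = Prod.swap '' {e : Fin n × Fin n | e ∈ copyEdges n false P S ∧
              (e, c) ∈ matchColoredEdges n t {T1, T2}} := by
        ext ⟨x, y⟩
        simp only [Set.mem_setOf_eq, Set.mem_image, hce, Finset.mem_product, hmF,
          Prod.exists, Prod.swap_prod_mk, Prod.mk.injEq]
        constructor
        · rintro ⟨hx, hy, h⟩
          exact ⟨y, x, ⟨⟨hy, hx⟩, h⟩, rfl, rfl⟩
        · rintro ⟨u, v, ⟨⟨hu, hv⟩, h⟩, rfl, rfl⟩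
          exact ⟨hv, hu, h⟩
      rw [hseteq, Set.ncard_image_of_injective _ Prod.swap_injective]
      exact hpar c
    · obtain ⟨e, he, c, hc⟩ := htouch T1 hT1C
      obtain ⟨s, p⟩ := e
      rw [hce, Finset.mem_product] at he
      exact ⟨p, he.2, s, he.1, c, hc⟩
    · obtain ⟨e, he, c, hc⟩ := htouch T2 hT2C
      obtain ⟨s, p⟩ := e
      rw [hce, Finset.mem_product] at he
      exact ⟨p, he.2, s, he.1, c, hc⟩
end

section
/- In the auxiliary hypergraph H1 built from K_{n,n} (with t ≥ 2), every conflict with respect to H1 contains a subset which belongs to 𝒞, the set of all inclusion-minimal irreducible conflicts in H1. -/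
open Finset

/-- The bad copy of `K_{2,r}` with 2-side `P` and `r`-side `S` is *reducible* with respect
to `F`: its edges can be partitioned into `m ≥ 2` bad copies of `K_{2,r_1}, …, K_{2,r_m}`
(with each `r_u < r`), all having the same vertex side of size 2 as the copy;
equivalently, `S` can be partitioned into `m ≥ 2` nonempty sets `S_u` with each
`(P, S_u)` a bad copy. -/
def IsReducible (n t : ℕ) (F : Set ((Fin n × Fin n) × Col1 n t)) (side : Bool)
    (P S : Finset (Fin n)) : Prop :=
  ∃ m : ℕ, 2 ≤ m ∧ ∃ Sp : Fin m → Finset (Fin n),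
    (∀ u, (Sp u).Nonempty) ∧ (∀ u, (Sp u).card < S.card) ∧
    (∀ u v, u ≠ v → Disjoint (Sp u) (Sp v)) ∧
    Finset.univ.biUnion Sp = S ∧
    ∀ u, IsBadCopy n t F side P (Sp u)

/-- An irreducible conflict with respect to the tile system `tile`: a matching `C` of at
least two tiles such that `E_C` contains an irreducible bad copy of some `K_{2,r}` using
at least one edge from each tile of `C`. -/
def IsIrredConflictWrt (n t : ℕ) (tile : Finset (VH1 n t) → Prop)
    (C : Finset (Finset (VH1 n t))) : Prop :=
  2 ≤ C.card ∧ IsMatching n t tile C ∧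
    ∃ (side : Bool) (P S : Finset (Fin n)),
      IsBadCopy n t (matchColoredEdges n t C) side P S ∧
      ¬ IsReducible n t (matchColoredEdges n t C) side P S ∧
      ∀ T ∈ C, ∃ e ∈ copyEdges n side P S, ∃ i : Col1 n t, (e, i) ∈ coloredEdges n t T

/-- `𝒞`: the set of all inclusion-minimal irreducible conflicts in `H₁`. -/
def minIrredConflicts (n t : ℕ) : Set (Finset (Finset (VH1 n t))) :=
  {C | IsIrredConflictWrt n t (IsTile1 n t) C ∧
    ∀ C' : Finset (Finset (VH1 n t)), C' ⊂ C → ¬ IsIrredConflictWrt n t (IsTile1 n t) C'}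

-- ===== auxiliary lemmas =====

lemma cross_struct {n t : ℕ} {i : Col1 n t} {a b : Fin (t+1) → Fin n} {x y : Fin n}
    (h : (Sum.inl s(Sum.inl x, Sum.inr y) : VH1 n t) ∈ tileVerts n t i a b) :
    (∃ j, x = a j) ∧ (∃ j, y = b j) := by
  simp only [tileVerts, Set.mem_setOf_eq, Sym2.eq_iff, Sum.inl.injEq, Sum.inr.injEq,
    reduceCtorEq, and_false, false_and, or_false, false_or, or_self, exists_false,
    exists_and_left] at h
  obtain ⟨j, j', -, hx, hy⟩ := h
  exact ⟨⟨j, hx⟩, ⟨j', hy⟩⟩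

lemma pair_left {n t : ℕ} {T : Finset (VH1 n t)} (hT : IsTile1 n t T)
    {x1 x2 y1 y2 : Fin n} (hne : x1 ≠ x2)
    (h1 : (Sum.inl s(Sum.inl x1, Sum.inr y1) : VH1 n t) ∈ T)
    (h2 : (Sum.inl s(Sum.inl x2, Sum.inr y2) : VH1 n t) ∈ T) :
    (Sum.inl s(Sum.inl x1, Sum.inl x2) : VH1 n t) ∈ T := by
  obtain ⟨i, a, b, ha, hb, hset⟩ := hT
  have hm : ∀ v : VH1 n t, v ∈ T ↔ v ∈ tileVerts n t i a b := by
    intro v; rw [← Finset.mem_coe, hset]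
  obtain ⟨⟨j, hj⟩, -⟩ := cross_struct ((hm _).mp h1)
  obtain ⟨⟨k, hk⟩, -⟩ := cross_struct ((hm _).mp h2)
  have hjk : j ≠ k := fun h => hne (by rw [hj, hk, h])
  exact (hm _).mpr (Or.inr (Or.inr (Or.inr (Or.inl ⟨j, k, hjk, by rw [hj, hk]⟩))))

lemma pair_right {n t : ℕ} {T : Finset (VH1 n t)} (hT : IsTile1 n t T)
    {x1 x2 y1 y2 : Fin n} (hne : y1 ≠ y2)
    (h1 : (Sum.inl s(Sum.inl x1, Sum.inr y1) : VH1 n t) ∈ T)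
    (h2 : (Sum.inl s(Sum.inl x2, Sum.inr y2) : VH1 n t) ∈ T) :
    (Sum.inl s(Sum.inr y1, Sum.inr y2) : VH1 n t) ∈ T := by
  obtain ⟨i, a, b, ha, hb, hset⟩ := hT
  have hm : ∀ v : VH1 n t, v ∈ T ↔ v ∈ tileVerts n t i a b := by
    intro v; rw [← Finset.mem_coe, hset]
  obtain ⟨-, ⟨j, hj⟩⟩ := cross_struct ((hm _).mp h1)
  obtain ⟨-, ⟨k, hk⟩⟩ := cross_struct ((hm _).mp h2)
  have hjk : j ≠ k := fun h => hne (by rw [hj, hk, h])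
  exact (hm _).mpr (Or.inr (Or.inr (Or.inr (Or.inr ⟨j, k, hjk, by rw [hj, hk]⟩))))

lemma mem_matchColoredEdges {n t : ℕ} {C : Finset (Finset (VH1 n t))}
    {ec : (Fin n × Fin n) × Col1 n t} :
    ec ∈ matchColoredEdges n t C ↔ ∃ T ∈ C, ec ∈ coloredEdges n t T := by
  simp [matchColoredEdges]

/-- Extract an inclusion-minimal irreducible conflict from an irreducible conflict. -/
lemma exists_min_of_irred (n t : ℕ) (C : Finset (Finset (VH1 n t)))
    (h : IsIrredConflictWrt n t (IsTile1 n t) C) :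
    ∃ C' ⊆ C, C' ∈ minIrredConflicts n t := by
  induction C using Finset.strongInduction with
  | _ C ih =>
    by_cases h2 : ∃ C'' ⊂ C, IsIrredConflictWrt n t (IsTile1 n t) C''
    · obtain ⟨C'', hsub, h''⟩ := h2
      obtain ⟨C', hs, hm⟩ := ih C'' hsub h''
      exact ⟨C', hs.trans hsub.subset, hm⟩
    · push_neg at h2
      exact ⟨C, subset_rfl, h, h2⟩

/-- If every piece is touched by at most one tile, we get a contradiction. -/
lemma no_all_single (n t : ℕ) (C : Finset (Finset (VH1 n t))) (side : Bool)
    (P S : Finset (Fin n)) (m : ℕ) (Sp : Fin m → Finset (Fin n))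
    (hcard : 2 ≤ C.card) (hM : IsMatching n t (IsTile1 n t) C)
    (hP : P.card = 2)
    (hne : ∀ u, (Sp u).Nonempty)
    (hunion : Finset.univ.biUnion Sp = S)
    (hcol : ∀ u, ∀ e ∈ copyEdges n side P (Sp u),
      ∃ i : Col1 n t, (e, i) ∈ matchColoredEdges n t C)
    (htouch : ∀ T ∈ C, ∃ e ∈ copyEdges n side P S, ∃ i : Col1 n t,
      (e, i) ∈ coloredEdges n t T)
    (hsingle : ∀ u : Fin m, ∀ T1 ∈ C, ∀ T2 ∈ C,
      (∃ e ∈ copyEdges n side P (Sp u), ∃ i, (e, i) ∈ coloredEdges n t T1) →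
      (∃ e ∈ copyEdges n side P (Sp u), ∃ i, (e, i) ∈ coloredEdges n t T2) → T1 = T2) :
    False := by
  obtain ⟨p1, p2, hp12, hPeq⟩ := Finset.card_eq_two.mp hP
  -- the pair vertex
  have claim : ∃ w : VH1 n t, ∀ u : Fin m, ∃ T ∈ C, w ∈ T ∧
      ∀ T' ∈ C, (∃ e ∈ copyEdges n side P (Sp u), ∃ i, (e, i) ∈ coloredEdges n t T') →
        T' = T := by
    refine ⟨Sum.inl (cond side s(Sum.inl p1, Sum.inl p2) s(Sum.inr p1, Sum.inr p2)), ?_⟩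
    intro u
    obtain ⟨s, hsmem⟩ := hne u
    set e1 : Fin n × Fin n := cond side (p1, s) (s, p1) with he1def
    set e2 : Fin n × Fin n := cond side (p2, s) (s, p2) with he2def
    have he1 : e1 ∈ copyEdges n side P (Sp u) := by
      cases side <;> simp [copyEdges, he1def, hPeq, hsmem]
    have he2 : e2 ∈ copyEdges n side P (Sp u) := by
      cases side <;> simp [copyEdges, he2def, hPeq, hsmem]
    obtain ⟨i1, hi1⟩ := hcol u e1 he1
    obtain ⟨i2, hi2⟩ := hcol u e2 he2
    obtain ⟨T1, hT1C, hT1⟩ := mem_matchColoredEdges.mp hi1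
    obtain ⟨T2, hT2C, hT2⟩ := mem_matchColoredEdges.mp hi2
    have heq : T2 = T1 := hsingle u T2 hT2C T1 hT1C ⟨e2, he2, i2, hT2⟩ ⟨e1, he1, i1, hT1⟩
    rw [heq] at hT2
    refine ⟨T1, hT1C, ?_, fun T' hT' htt => hsingle u T' hT' T1 hT1C htt ⟨e1, he1, i1, hT1⟩⟩
    have hm1 := hT1.1
    have hm2 := hT2.1
    have htile := hM.1 T1 hT1C
    cases side with
    | true => exact pair_left htile hp12 hm1 hm2
    | false => exact pair_right htile hp12 hm1 hm2
  obtain ⟨w, hw⟩ := claim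
  -- each tile of C contains w
  have hall : ∀ T ∈ C, w ∈ T := by
    intro T hT
    obtain ⟨e, he, i, hi⟩ := htouch T hT
    -- find the piece containing e
    have : ∃ u : Fin m, e ∈ copyEdges n side P (Sp u) := by
      cases side with
      | true =>
        simp only [copyEdges, if_true, Finset.mem_product] at he ⊢
        obtain ⟨h1, h2⟩ := he
        rw [← hunion] at h2
        obtain ⟨u, -, hu⟩ := Finset.mem_biUnion.mp h2
        exact ⟨u, h1, hu⟩
      | false =>
        simp only [copyEdges, Bool.false_eq_true, if_false, Finset.mem_product] at he ⊢
        obtain ⟨h1, h2⟩ := he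
        rw [← hunion] at h1
        obtain ⟨u, -, hu⟩ := Finset.mem_biUnion.mp h1
        exact ⟨u, hu, h2⟩
    obtain ⟨u, heu⟩ := this
    obtain ⟨T0, hT0C, hwT0, huniq⟩ := hw u
    rw [huniq T hT ⟨e, heu, i, hi⟩]
    exact hwT0
  obtain ⟨A, hA, B, hB, hAB⟩ := Finset.one_lt_card.mp hcard
  exact Finset.disjoint_left.mp (hM.2 A hA B hB hAB) (hall A hA) (hall B hB)

/-- Main induction: any conflict-like configuration contains a minimal irreducible
conflict. -/
lemma main_lemma (n t : ℕ) : ∀ (N : ℕ) (C : Finset (Finset (VH1 n t))) (side : Bool)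
    (P S : Finset (Fin n)), S.card ≤ N → 2 ≤ C.card →
    IsMatching n t (IsTile1 n t) C →
    IsBadCopy n t (matchColoredEdges n t C) side P S →
    (∀ T ∈ C, ∃ e ∈ copyEdges n side P S, ∃ i : Col1 n t, (e, i) ∈ coloredEdges n t T) →
    ∃ C' ⊆ C, C' ∈ minIrredConflicts n t := by
  intro N
  induction N with
  | zero =>
    intro C side P S hS _ _ hbad _
    have := hbad.2.1.card_pos
    omega
  | succ N ih =>
    intro C side P S hS hcard hM hbad htouch
    classical
    by_cases hred : IsReducible n t (matchColoredEdges n t C) side P S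
    · obtain ⟨m, hm, Sp, hne, hlt, hdisj, hunion, hbads⟩ := hred
      by_cases hp : ∃ u : Fin m, ∃ T1 ∈ C, ∃ T2 ∈ C, T1 ≠ T2 ∧
          (∃ e ∈ copyEdges n side P (Sp u), ∃ i, (e, i) ∈ coloredEdges n t T1) ∧
          (∃ e ∈ copyEdges n side P (Sp u), ∃ i, (e, i) ∈ coloredEdges n t T2)
      · obtain ⟨u, T1, hT1, T2, hT2, hne12, ht1, ht2⟩ := hp
        set C' := C.filter
          (fun T => ∃ e ∈ copyEdges n side P (Sp u), ∃ i, (e, i) ∈ coloredEdges n t T)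
          with hC'def
        have hsub : C' ⊆ C := Finset.filter_subset _ _
        have hkey : ∀ e ∈ copyEdges n side P (Sp u), ∀ i : Col1 n t,
            ((e, i) ∈ matchColoredEdges n t C ↔ (e, i) ∈ matchColoredEdges n t C') := by
          intro e he i
          constructor
          · intro h
            obtain ⟨T, hT, hTe⟩ := mem_matchColoredEdges.mp h
            exact mem_matchColoredEdges.mpr
              ⟨T, Finset.mem_filter.mpr ⟨hT, e, he, i, hTe⟩, hTe⟩
          · intro h
            obtain ⟨T, hT, hTe⟩ := mem_matchColoredEdges.mp h
            exact mem_matchColoredEdges.mpr ⟨T, hsub hT, hTe⟩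
        obtain ⟨hP2, hSne, hcolu, hevenu⟩ := hbads u
        have hcard' : 2 ≤ C'.card := by
          refine Finset.one_lt_card.mpr ⟨T1, Finset.mem_filter.mpr ⟨hT1, ht1⟩,
            T2, Finset.mem_filter.mpr ⟨hT2, ht2⟩, hne12⟩
        have hM' : IsMatching n t (IsTile1 n t) C' :=
          ⟨fun T hT => hM.1 T (hsub hT),
           fun T hT T' hT' => hM.2 T (hsub hT) T' (hsub hT')⟩
        have hbad' : IsBadCopy n t (matchColoredEdges n t C') side P (Sp u) := by
          refine ⟨hP2, hSne, fun e he => ?_, fun i => ?_⟩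
          · obtain ⟨i, hi⟩ := hcolu e he
            exact ⟨i, (hkey e he i).mp hi⟩
          · have hseteq : {e : Fin n × Fin n | e ∈ copyEdges n side P (Sp u) ∧
                (e, i) ∈ matchColoredEdges n t C'} =
                {e : Fin n × Fin n | e ∈ copyEdges n side P (Sp u) ∧
                (e, i) ∈ matchColoredEdges n t C} :=
              Set.ext fun e => and_congr_right fun he => (hkey e he i).symm
            rw [hseteq]
            exact hevenu i
        have htouch' : ∀ T ∈ C', ∃ e ∈ copyEdges n side P (Sp u), ∃ i : Col1 n t,
            (e, i) ∈ coloredEdges n t T := fun T hT => (Finset.mem_filter.mp hT).2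
        have hcardS : (Sp u).card ≤ N := by have := hlt u; omega
        obtain ⟨C'', hs, hmem⟩ := ih C' side P (Sp u) hcardS hcard' hM' hbad' htouch'
        exact ⟨C'', hs.trans hsub, hmem⟩
      · exfalso
        refine no_all_single n t C side P S m Sp hcard hM hbad.1 hne hunion
          (fun u e he => (hbads u).2.2.1 e he) htouch ?_
        intro u T1 hT1 T2 hT2 h1 h2
        by_contra hne12
        exact hp ⟨u, T1, hT1, T2, hT2, hne12, h1, h2⟩
    · exact exists_min_of_irred n t C ⟨hcard, hM, side, P, S, hbad, hred, htouch⟩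

/-- In the auxiliary hypergraph `H₁` built from `K_{n,n}` (with `t ≥ 2`), every conflict
with respect to `H₁` contains a subset belonging to `𝒞`, the set of all inclusion-minimal
irreducible conflicts in `H₁`. -/
theorem stmt7 (t n : ℕ) (ht : 2 ≤ t) (hn : 1 ≤ n)
    (C : Finset (Finset (VH1 n t))) (hC : IsConflictWrt n t (IsTile1 n t) C) :
    ∃ C' : Finset (Finset (VH1 n t)), C' ⊆ C ∧ C' ∈ minIrredConflicts n t := by
  obtain ⟨hcard, hM, side, P, S, hbad, htouch⟩ := hC
  exact main_lemma n t S.card C side P S le_rfl hcard hM hbad htouch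
end

section
/- In the auxiliary hypergraph H1 built from K_{n,n} (with t ≥ 2), if M is a matching in H1 that contains no member of 𝒞 as a subset, then in the partial edge-coloring of K_{n,n} corresponding to M, every copy of K_{2,t} all of whose edges are colored has a color appearing on an odd number of its edges (i.e., there is no bad copy of K_{2,t}). -/
open Finset

section AuxProof

variable {n t : ℕ}

lemma edge_mem_tile {i : Col1 n t} {a b : Fin (t+1) → Fin n} {x y : Fin n}
    (h : (Sum.inl s(Sum.inl x, Sum.inr y) : VH1 n t) ∈ tileVerts n t i a b) :
    ∃ j j', j ≠ j' ∧ x = a j ∧ y = b j' := by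
  simp only [tileVerts, Set.mem_setOf_eq] at h
  rcases h with ⟨j, hj⟩ | ⟨j, hj⟩ | ⟨j, j', hne, hj⟩ | ⟨j, j', hne, hj⟩ | ⟨j, j', hne, hj⟩
  · exact absurd hj (by simp)
  · exact absurd hj (by simp)
  · rw [Sum.inl.injEq, Sym2.eq_iff] at hj
    rcases hj with ⟨h1, h2⟩ | ⟨h1, h2⟩
    · exact ⟨j, j', hne, Sum.inl.inj h1, Sum.inr.inj h2⟩
    · exact absurd h1 (by simp)
  · rw [Sum.inl.injEq, Sym2.eq_iff] at hj
    rcases hj with ⟨h1, h2⟩ | ⟨h1, h2⟩ <;> simp_all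
  · rw [Sum.inl.injEq, Sym2.eq_iff] at hj
    rcases hj with ⟨h1, h2⟩ | ⟨h1, h2⟩ <;> simp_all

lemma pairX_mem {T : Finset (VH1 n t)} (hT : IsTile1 n t T)
    {x x' y : Fin n} (hxx : x ≠ x')
    (h1 : (Sum.inl s(Sum.inl x, Sum.inr y) : VH1 n t) ∈ T)
    (h2 : (Sum.inl s(Sum.inl x', Sum.inr y) : VH1 n t) ∈ T) :
    (Sum.inl s(Sum.inl x, Sum.inl x') : VH1 n t) ∈ T := by
  obtain ⟨i, a, b, ha, hb, heq⟩ := hT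
  have hiff : ∀ v, v ∈ T ↔ v ∈ tileVerts n t i a b := fun v => by
    rw [← Finset.mem_coe, heq]
  obtain ⟨j1, k1, hne1, hx1, hy1⟩ := edge_mem_tile ((hiff _).mp h1)
  obtain ⟨j2, k2, hne2, hx2, hy2⟩ := edge_mem_tile ((hiff _).mp h2)
  have hj : j1 ≠ j2 := fun h => hxx (by rw [hx1, hx2, h])
  exact (hiff _).mpr (Or.inr (Or.inr (Or.inr (Or.inl ⟨j1, j2, hj, by rw [hx1, hx2]⟩))))

lemma pairY_mem {T : Finset (VH1 n t)} (hT : IsTile1 n t T)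
    {x y y' : Fin n} (hyy : y ≠ y')
    (h1 : (Sum.inl s(Sum.inl x, Sum.inr y) : VH1 n t) ∈ T)
    (h2 : (Sum.inl s(Sum.inl x, Sum.inr y') : VH1 n t) ∈ T) :
    (Sum.inl s(Sum.inr y, Sum.inr y') : VH1 n t) ∈ T := by
  obtain ⟨i, a, b, ha, hb, heq⟩ := hT
  have hiff : ∀ v, v ∈ T ↔ v ∈ tileVerts n t i a b := fun v => by
    rw [← Finset.mem_coe, heq]
  obtain ⟨j1, k1, hne1, hx1, hy1⟩ := edge_mem_tile ((hiff _).mp h1)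
  obtain ⟨j2, k2, hne2, hx2, hy2⟩ := edge_mem_tile ((hiff _).mp h2)
  have hk : k1 ≠ k2 := fun h => hyy (by rw [hy1, hy2, h])
  exact (hiff _).mpr (Or.inr (Or.inr (Or.inr (Or.inr ⟨k1, k2, hk, by rw [hy1, hy2]⟩))))

lemma no_K2t_in_tile (ht : 1 ≤ t) {T : Finset (VH1 n t)} (hT : IsTile1 n t T)
    {side : Bool} {p1 p2 : Fin n} (hp : p1 ≠ p2) {S : Finset (Fin n)} (hS : S.card = t)
    (hall : ∀ e ∈ copyEdges n side {p1, p2} S,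
      (Sum.inl s(Sum.inl e.1, Sum.inr e.2) : VH1 n t) ∈ T) : False := by
  obtain ⟨i, a, b, ha, hb, heq⟩ := hT
  have hiff : ∀ v, v ∈ T ↔ v ∈ tileVerts n t i a b := fun v => by
    rw [← Finset.mem_coe, heq]
  have hSne : S.Nonempty := by rw [← Finset.card_pos, hS]; omega
  obtain ⟨s0, hs0⟩ := hSne
  cases side with
  | true =>
    have hmem : ∀ p ∈ ({p1, p2} : Finset (Fin n)), ∀ s ∈ S,
        ∃ j j', j ≠ j' ∧ p = a j ∧ s = b j' := by
      intro p hpm s hs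
      exact edge_mem_tile ((hiff _).mp
        (hall (p, s) (by simp [copyEdges, Finset.mem_product, hpm, hs])))
    obtain ⟨J1, K0, _, hJ1, _⟩ := hmem p1 (by simp) s0 hs0
    obtain ⟨J2, K0', _, hJ2, _⟩ := hmem p2 (by simp) s0 hs0
    have hJ : J1 ≠ J2 := fun h => hp (by rw [hJ1, hJ2, h])
    have hsub : S ⊆ ((Finset.univ.erase J1).erase J2).image b := by
      intro s hs
      obtain ⟨j, k, hjk, hpj, hsk⟩ := hmem p1 (by simp) s hs
      obtain ⟨j', k', hjk', hpj', hsk'⟩ := hmem p2 (by simp) s hs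
      have hjJ1 : j = J1 := ha (by rw [← hpj, ← hJ1])
      have hj'J2 : j' = J2 := ha (by rw [← hpj', ← hJ2])
      have hkk' : k = k' := hb (by rw [← hsk, ← hsk'])
      refine Finset.mem_image.mpr ⟨k, ?_, hsk.symm⟩
      refine Finset.mem_erase.mpr ⟨?_, Finset.mem_erase.mpr ⟨?_, Finset.mem_univ _⟩⟩
      · rw [hkk']; exact fun h => hjk' (by rw [hj'J2, h])
      · exact fun h => hjk (by rw [hjJ1, h])
    have hcard := Finset.card_le_card hsub
    have h1 : (((Finset.univ : Finset (Fin (t+1))).erase J1).erase J2).card = t - 1 := by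
      rw [Finset.card_erase_of_mem (Finset.mem_erase.mpr ⟨hJ.symm, Finset.mem_univ _⟩),
        Finset.card_erase_of_mem (Finset.mem_univ _)]
      simp
    have h2 : ((((Finset.univ : Finset (Fin (t+1))).erase J1).erase J2).image b).card ≤ t - 1 :=
      h1 ▸ Finset.card_image_le
    omega
  | false =>
    have hmem : ∀ p ∈ ({p1, p2} : Finset (Fin n)), ∀ s ∈ S,
        ∃ j j', j ≠ j' ∧ s = a j ∧ p = b j' := by
      intro p hpm s hs
      exact edge_mem_tile ((hiff _).mp
        (hall (s, p) (by simp [copyEdges, Finset.mem_product, hpm, hs])))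
    obtain ⟨J0, K1, _, _, hK1⟩ := hmem p1 (by simp) s0 hs0
    obtain ⟨J0', K2, _, _, hK2⟩ := hmem p2 (by simp) s0 hs0
    have hK : K1 ≠ K2 := fun h => hp (by rw [hK1, hK2, h])
    have hsub : S ⊆ ((Finset.univ.erase K1).erase K2).image a := by
      intro s hs
      obtain ⟨j, k, hjk, hsj, hpk⟩ := hmem p1 (by simp) s hs
      obtain ⟨j', k', hjk', hsj', hpk'⟩ := hmem p2 (by simp) s hs
      have hkK1 : k = K1 := hb (by rw [← hpk, ← hK1])
      have hk'K2 : k' = K2 := hb (by rw [← hpk', ← hK2])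
      have hjj' : j = j' := ha (by rw [← hsj, ← hsj'])
      refine Finset.mem_image.mpr ⟨j, ?_, hsj.symm⟩
      refine Finset.mem_erase.mpr ⟨?_, Finset.mem_erase.mpr ⟨?_, Finset.mem_univ _⟩⟩
      · rw [hjj']; exact fun h => hjk' (by rw [hk'K2, h])
      · exact fun h => hjk (by rw [hkK1, h])
    have hcard := Finset.card_le_card hsub
    have h1 : (((Finset.univ : Finset (Fin (t+1))).erase K1).erase K2).card = t - 1 := by
      rw [Finset.card_erase_of_mem (Finset.mem_erase.mpr ⟨hK.symm, Finset.mem_univ _⟩),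
        Finset.card_erase_of_mem (Finset.mem_univ _)]
      simp
    have h2 : ((((Finset.univ : Finset (Fin (t+1))).erase K1).erase K2).image a).card ≤ t - 1 :=
      h1 ▸ Finset.card_image_le
    omega

lemma copyEdges_mono {side : Bool} {P S S' : Finset (Fin n)} (h : S ⊆ S') :
    copyEdges n side P S ⊆ copyEdges n side P S' := by
  cases side with
  | true =>
    simp only [copyEdges, if_true]
    exact Finset.product_subset_product (Finset.Subset.refl P) h
  | false =>
    simp only [copyEdges, if_false]
    exact Finset.product_subset_product h (Finset.Subset.refl P)

lemma exists_min_conflict :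
    ∀ N (C : Finset (Finset (VH1 n t))), C.card ≤ N →
      IsIrredConflictWrt n t (IsTile1 n t) C →
      ∃ C' ∈ minIrredConflicts n t, C' ⊆ C := by
  intro N
  induction N with
  | zero =>
    intro C hc h
    exact absurd h.1 (by omega)
  | succ N ih =>
    intro C hc h
    by_cases hmin : ∀ C' ⊂ C, ¬ IsIrredConflictWrt n t (IsTile1 n t) C'
    · exact ⟨C, ⟨h, hmin⟩, Finset.Subset.refl C⟩
    · push_neg at hmin
      obtain ⟨C', hsub, h'⟩ := hmin
      have hcard := Finset.card_lt_card hsub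
      obtain ⟨C'', hm, hs⟩ := ih C' (by omega) h'
      exact ⟨C'', hm, hs.trans hsub.subset⟩

lemma key_lemma {M : Finset (Finset (VH1 n t))}
    (hM : IsMatching n t (IsTile1 n t) M)
    (hfree : ∀ C ∈ minIrredConflicts n t, ¬ C ⊆ M)
    {side : Bool} {p1 p2 : Fin n} (hp : p1 ≠ p2) :
    ∀ N (S : Finset (Fin n)), S.card ≤ N →
      IsBadCopy n t (matchColoredEdges n t M) side {p1, p2} S →
      ∃ T ∈ M, ∀ e ∈ copyEdges n side {p1, p2} S,
        (Sum.inl s(Sum.inl e.1, Sum.inr e.2) : VH1 n t) ∈ T := by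
  classical
  intro N
  induction N with
  | zero =>
    intro S hc hbad
    rw [Nat.le_zero, Finset.card_eq_zero] at hc
    subst hc
    exact absurd hbad.2.1 (by simp)
  | succ N ih =>
    intro S hcard hbad
    obtain ⟨hP2, hSne, hcol, heven⟩ := hbad
    by_cases hred : IsReducible n t (matchColoredEdges n t M) side {p1, p2} S
    · obtain ⟨m, hm2, Sp, hne, hlt, hdis, hun, hb⟩ := hred
      have hTu : ∀ u : Fin m, ∃ T ∈ M, ∀ e ∈ copyEdges n side {p1, p2} (Sp u),
          (Sum.inl s(Sum.inl e.1, Sum.inr e.2) : VH1 n t) ∈ T := by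
        intro u
        exact ih (Sp u) (by have := hlt u; omega) (hb u)
      choose T hTM hTe using hTu
      have hpvT : ∀ u, (if side then (Sum.inl s(Sum.inl p1, Sum.inl p2) : VH1 n t)
          else Sum.inl s(Sum.inr p1, Sum.inr p2)) ∈ T u := by
        intro u
        obtain ⟨s, hs⟩ := hne u
        have htile := hM.1 (T u) (hTM u)
        cases side with
        | true =>
          have h1 := hTe u (p1, s) (by simp [copyEdges, Finset.mem_product, hs])
          have h2 := hTe u (p2, s) (by simp [copyEdges, Finset.mem_product, hs])
          simpa using pairX_mem htile hp h1 h2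
        | false =>
          have h1 := hTe u (s, p1) (by simp [copyEdges, Finset.mem_product, hs])
          have h2 := hTe u (s, p2) (by simp [copyEdges, Finset.mem_product, hs])
          simpa using pairY_mem htile hp h1 h2
      have u0 : Fin m := ⟨0, by omega⟩
      have hTeq : ∀ u, T u = T u0 := by
        intro u
        by_contra hne'
        exact Finset.disjoint_left.mp (hM.2 _ (hTM u) _ (hTM u0) hne') (hpvT u) (hpvT u0)
      refine ⟨T u0, hTM u0, ?_⟩
      intro e he
      have : ∃ u, e ∈ copyEdges n side {p1, p2} (Sp u) := by
        cases side with
        | true =>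
          simp only [copyEdges, if_true, Finset.mem_product] at he ⊢
          obtain ⟨he1, he2⟩ := he
          rw [← hun] at he2
          obtain ⟨u, _, hu⟩ := Finset.mem_biUnion.mp he2
          exact ⟨u, he1, hu⟩
        | false =>
          simp only [copyEdges, Bool.false_eq_true, if_false, Finset.mem_product] at he ⊢
          obtain ⟨he1, he2⟩ := he
          rw [← hun] at he1
          obtain ⟨u, _, hu⟩ := Finset.mem_biUnion.mp he1
          exact ⟨u, hu, he2⟩
      obtain ⟨u, hu⟩ := this
      rw [← hTeq u]
      exact hTe u e hu
    · set C : Finset (Finset (VH1 n t)) :=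
        M.filter (fun T => ∃ e ∈ copyEdges n side {p1, p2} S,
          ∃ i, (e, i) ∈ coloredEdges n t T) with hCdef
      have hmemC : ∀ {e : Fin n × Fin n} {i}, e ∈ copyEdges n side {p1, p2} S →
          (e, i) ∈ matchColoredEdges n t M →
          ∃ T ∈ C, (e, i) ∈ coloredEdges n t T := by
        intro e i he hei
        simp only [matchColoredEdges, Set.mem_iUnion] at hei
        obtain ⟨T, hTM', hT⟩ := hei
        exact ⟨T, Finset.mem_filter.mpr ⟨hTM', e, he, i, hT⟩, hT⟩
      have hiffEC : ∀ e ∈ copyEdges n side {p1, p2} S, ∀ i : Col1 n t,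
          ((e, i) ∈ matchColoredEdges n t M ↔ (e, i) ∈ matchColoredEdges n t C) := by
        intro e he i
        constructor
        · intro h
          obtain ⟨T, hT, hei⟩ := hmemC he h
          simp only [matchColoredEdges, Set.mem_iUnion]
          exact ⟨T, hT, hei⟩
        · intro h
          simp only [matchColoredEdges, Set.mem_iUnion] at h ⊢
          obtain ⟨T, hT, hei⟩ := h
          exact ⟨T, (Finset.mem_filter.mp hT).1, hei⟩
      by_cases hC1 : C.card ≤ 1
      · obtain ⟨s0, hs0⟩ := hSne
        have he0 : (if side then (p1, s0) else (s0, p1)) ∈ copyEdges n side {p1, p2} S := by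
          cases side <;> simp [copyEdges, Finset.mem_product, hs0]
        obtain ⟨i0, hi0⟩ := hcol _ he0
        obtain ⟨T0, hT0C, _⟩ := hmemC he0 hi0
        refine ⟨T0, (Finset.mem_filter.mp hT0C).1, ?_⟩
        intro e he
        obtain ⟨i, hi⟩ := hcol e he
        obtain ⟨T, hTC, hT⟩ := hmemC he hi
        have hTT0 : T = T0 := Finset.card_le_one.mp hC1 T hTC T0 hT0C
        rw [← hTT0]
        exact hT.1
      · push_neg at hC1
        have hconf : IsIrredConflictWrt n t (IsTile1 n t) C := by
          refine ⟨hC1, ⟨fun T hT => hM.1 T (Finset.mem_filter.mp hT).1,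
            fun T hT T' hT' hne' => hM.2 T (Finset.mem_filter.mp hT).1 T'
              (Finset.mem_filter.mp hT').1 hne'⟩,
            side, {p1, p2}, S, ⟨hP2, hSne, ?_, ?_⟩, ?_, ?_⟩
          · intro e he
            obtain ⟨i, hi⟩ := hcol e he
            exact ⟨i, (hiffEC e he i).mp hi⟩
          · intro i
            have hsetEq : {e : Fin n × Fin n | e ∈ copyEdges n side {p1, p2} S ∧
                (e, i) ∈ matchColoredEdges n t C}
                = {e | e ∈ copyEdges n side {p1, p2} S ∧ (e, i) ∈ matchColoredEdges n t M} := by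
              ext e
              constructor
              · rintro ⟨h1, h2⟩; exact ⟨h1, (hiffEC e h1 i).mpr h2⟩
              · rintro ⟨h1, h2⟩; exact ⟨h1, (hiffEC e h1 i).mp h2⟩
            rw [hsetEq]
            exact heven i
          · intro hredC
            apply hred
            obtain ⟨m, hm2, Sp, hne, hlt, hdis, hun, hb⟩ := hredC
            refine ⟨m, hm2, Sp, hne, hlt, hdis, hun, fun u => ?_⟩
            obtain ⟨hc1, hc2, hc3, hc4⟩ := hb u
            have hsubS : Sp u ⊆ S := fun s hs =>
              hun ▸ Finset.mem_biUnion.mpr ⟨u, Finset.mem_univ u, hs⟩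
            have hsub : ∀ e ∈ copyEdges n side {p1, p2} (Sp u),
                e ∈ copyEdges n side {p1, p2} S := fun e he => copyEdges_mono hsubS he
            refine ⟨hc1, hc2, ?_, ?_⟩
            · intro e he
              obtain ⟨i, hi⟩ := hc3 e he
              exact ⟨i, (hiffEC e (hsub e he) i).mpr hi⟩
            · intro i
              have hsetEq : {e : Fin n × Fin n | e ∈ copyEdges n side {p1, p2} (Sp u) ∧
                  (e, i) ∈ matchColoredEdges n t M}
                  = {e | e ∈ copyEdges n side {p1, p2} (Sp u) ∧
                    (e, i) ∈ matchColoredEdges n t C} := by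
                ext e
                constructor
                · rintro ⟨h1, h2⟩; exact ⟨h1, (hiffEC e (hsub e h1) i).mp h2⟩
                · rintro ⟨h1, h2⟩; exact ⟨h1, (hiffEC e (hsub e h1) i).mpr h2⟩
              rw [hsetEq]
              exact hc4 i
          · intro T hT
            exact (Finset.mem_filter.mp hT).2
        obtain ⟨C', hC', hC'sub⟩ := exists_min_conflict C.card C (le_refl _) hconf
        exact (hfree C' hC' (hC'sub.trans (Finset.filter_subset _ M))).elim

end AuxProof

/-- In the auxiliary hypergraph `H₁` built from `K_{n,n}` (with `t ≥ 2`), if `M` is a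
matching in `H₁` containing no member of `𝒞` as a subset, then in the partial
edge-coloring of `K_{n,n}` corresponding to `M` there is no bad copy of `K_{2,t}` all of
whose edges are colored. -/
theorem stmt8 (t n : ℕ) (ht : 2 ≤ t) (hn : 1 ≤ n)
    (M : Finset (Finset (VH1 n t))) (hM : IsMatching n t (IsTile1 n t) M)
    (hfree : ∀ C ∈ minIrredConflicts n t, ¬ C ⊆ M) :
    ∀ (side : Bool) (P S : Finset (Fin n)), S.card = t →
      ¬ IsBadCopy n t (matchColoredEdges n t M) side P S := by
  intro side P S hScard hbad
  obtain ⟨p1, p2, hp, rfl⟩ := Finset.card_eq_two.mp hbad.1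
  obtain ⟨T, hTM, hTe⟩ := key_lemma hM hfree hp S.card S (le_refl _) hbad
  exact no_K2t_in_tile (by omega) (hM.1 T hTM) hp hScard hTe
end

section
/- In the auxiliary hypergraph H1 built from K_{n,n} (with t ≥ 2), there is a constant c depending only on t such that every vertex u of H1 satisfies |deg_{H1}(u) − n^{2t+1}/t!| ≤ c·n^{2t}; in particular, H1 is essentially d-regular for d = n^{2t+1}/t!. -/
open Finset

/-- `u` is a genuine vertex of `H₁`: either a 2-element subset of `X ∪ Y` (a non-diagonal
unordered pair), or a copy `v^i` of a vertex of `K_{n,n}` in some `V_i`. -/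
def IsVertexH1 (n t : ℕ) : VH1 n t → Prop
  | Sum.inl s => ¬ s.IsDiag
  | Sum.inr _ => True

/-- The degree of `u` in `H₁`: the number of tiles of `H₁` containing `u`. -/
noncomputable def degH1 (n t : ℕ) (u : VH1 n t) : ℕ :=
  {T : Finset (VH1 n t) | IsTile1 n t T ∧ u ∈ T}.ncard

namespace S14

variable {n t : ℕ}

lemma mem_inr_iff {i i' : Col1 n t} {a b : Fin (t+1) → Fin n} {v : Vtx n} :
    Sum.inr (i', v) ∈ tileVerts n t i a b ↔
      i' = i ∧ ((∃ j, v = Sum.inl (a j)) ∨ ∃ j, v = Sum.inr (b j)) := by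
  simp only [tileVerts, Set.mem_setOf_eq]
  constructor
  · rintro (⟨j, h⟩ | ⟨j, h⟩ | ⟨j, j', hj, h⟩ | ⟨j, j', hj, h⟩ | ⟨j, j', hj, h⟩) <;>
      simp_all
  · rintro ⟨rfl, (⟨j, rfl⟩ | ⟨j, rfl⟩)⟩
    · exact Or.inl ⟨j, rfl⟩
    · exact Or.inr (Or.inl ⟨j, rfl⟩)

lemma mem_cross_iff {i : Col1 n t} {a b : Fin (t+1) → Fin n} {x y : Fin n} :
    Sum.inl s(Sum.inl x, Sum.inr y) ∈ tileVerts n t i a b ↔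
      ∃ j j', j ≠ j' ∧ x = a j ∧ y = b j' := by
  simp only [tileVerts, Set.mem_setOf_eq]
  constructor
  · rintro (⟨j, h⟩ | ⟨j, h⟩ | ⟨j, j', hj, h⟩ | ⟨j, j', hj, h⟩ | ⟨j, j', hj, h⟩) <;>
      simp_all [Sym2.eq_iff]
    exact ⟨j, j', hj, rfl, rfl⟩
  · rintro ⟨j, j', hj, rfl, rfl⟩
    exact Or.inr (Or.inr (Or.inl ⟨j, j', hj, rfl⟩))

lemma mem_left_iff {i : Col1 n t} {a b : Fin (t+1) → Fin n} {x x' : Fin n} :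
    Sum.inl s(Sum.inl x, Sum.inl x') ∈ tileVerts n t i a b ↔
      ∃ j j', j ≠ j' ∧ x = a j ∧ x' = a j' := by
  simp only [tileVerts, Set.mem_setOf_eq]
  constructor
  · rintro (⟨j, h⟩ | ⟨j, h⟩ | ⟨j, j', hj, h⟩ | ⟨j, j', hj, h⟩ | ⟨j, j', hj, h⟩) <;>
      simp_all [Sym2.eq_iff]
    rcases h with ⟨h1, h2⟩ | ⟨h1, h2⟩
    · exact ⟨j, j', hj, h1, h2⟩
    · exact ⟨j', j, Ne.symm hj, h1, h2⟩
  · rintro ⟨j, j', hj, rfl, rfl⟩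
    exact Or.inr (Or.inr (Or.inr (Or.inl ⟨j, j', hj, rfl⟩)))

lemma mem_right_iff {i : Col1 n t} {a b : Fin (t+1) → Fin n} {y y' : Fin n} :
    Sum.inl s(Sum.inr y, Sum.inr y') ∈ tileVerts n t i a b ↔
      ∃ j j', j ≠ j' ∧ y = b j ∧ y' = b j' := by
  simp only [tileVerts, Set.mem_setOf_eq]
  constructor
  · rintro (⟨j, h⟩ | ⟨j, h⟩ | ⟨j, j', hj, h⟩ | ⟨j, j', hj, h⟩ | ⟨j, j', hj, h⟩) <;>
      simp_all [Sym2.eq_iff]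
    rcases h with ⟨h1, h2⟩ | ⟨h1, h2⟩
    · exact ⟨j, j', hj, h1, h2⟩
    · exact ⟨j', j, Ne.symm hj, h1, h2⟩
  · rintro ⟨j, j', hj, rfl, rfl⟩
    exact Or.inr (Or.inr (Or.inr (Or.inr ⟨j, j', hj, rfl⟩)))

end S14

namespace S14

variable {n t : ℕ}

lemma tileVerts_comp (i : Col1 n t) (a b : Fin (t+1) → Fin n) (σ : Equiv.Perm (Fin (t+1))) :
    tileVerts n t i (a ∘ σ) (b ∘ σ) = tileVerts n t i a b := by
  ext v
  simp only [tileVerts, Set.mem_setOf_eq, Function.comp_apply]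
  constructor
  · rintro (⟨j, h⟩ | ⟨j, h⟩ | ⟨j, j', hj, h⟩ | ⟨j, j', hj, h⟩ | ⟨j, j', hj, h⟩)
    · exact Or.inl ⟨σ j, h⟩
    · exact Or.inr (Or.inl ⟨σ j, h⟩)
    · exact Or.inr (Or.inr (Or.inl ⟨σ j, σ j', fun hh => hj (σ.injective hh), h⟩))
    · exact Or.inr (Or.inr (Or.inr (Or.inl ⟨σ j, σ j', fun hh => hj (σ.injective hh), h⟩)))
    · exact Or.inr (Or.inr (Or.inr (Or.inr ⟨σ j, σ j', fun hh => hj (σ.injective hh), h⟩)))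
  · rintro (⟨j, h⟩ | ⟨j, h⟩ | ⟨j, j', hj, h⟩ | ⟨j, j', hj, h⟩ | ⟨j, j', hj, h⟩)
    · exact Or.inl ⟨σ.symm j, by simpa using h⟩
    · exact Or.inr (Or.inl ⟨σ.symm j, by simpa using h⟩)
    · exact Or.inr (Or.inr (Or.inl ⟨σ.symm j, σ.symm j',
        fun hh => hj (σ.symm.injective hh), by simpa using h⟩))
    · exact Or.inr (Or.inr (Or.inr (Or.inl ⟨σ.symm j, σ.symm j',
        fun hh => hj (σ.symm.injective hh), by simpa using h⟩)))
    · exact Or.inr (Or.inr (Or.inr (Or.inr ⟨σ.symm j, σ.symm j',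
        fun hh => hj (σ.symm.injective hh), by simpa using h⟩)))

lemma tile_eq_exists {i i' : Col1 n t} {a b a' b' : Fin (t+1) → Fin n}
    (ha : Function.Injective a) (hb : Function.Injective b)
    (ha' : Function.Injective a') (hb' : Function.Injective b')
    (h : tileVerts n t i a b = tileVerts n t i' a' b') :
    i' = i ∧ ∃ σ : Equiv.Perm (Fin (t+1)), a' = a ∘ σ ∧ b' = b ∘ σ := by
  have hii : i' = i := by
    have h0 : Sum.inr (i', Sum.inl (a' 0)) ∈ tileVerts n t i' a' b' :=
      Or.inl ⟨0, rfl⟩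
    rw [← h] at h0
    exact (mem_inr_iff.1 h0).1
  subst hii
  have hA : ∀ j, ∃ k, a' j = a k := by
    intro j
    have h0 : Sum.inr (i', Sum.inl (a' j)) ∈ tileVerts n t i' a' b' := Or.inl ⟨j, rfl⟩
    rw [← h] at h0
    rcases (mem_inr_iff.1 h0).2 with ⟨k, hk⟩ | ⟨k, hk⟩
    · exact ⟨k, Sum.inl.inj hk⟩
    · exact absurd hk (by simp)
  have hB : ∀ j, ∃ k, b' j = b k := by
    intro j
    have h0 : Sum.inr (i', Sum.inr (b' j)) ∈ tileVerts n t i' a' b' :=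
      Or.inr (Or.inl ⟨j, rfl⟩)
    rw [← h] at h0
    rcases (mem_inr_iff.1 h0).2 with ⟨k, hk⟩ | ⟨k, hk⟩
    · exact absurd hk (by simp)
    · exact ⟨k, Sum.inr.inj hk⟩
  choose σ0 hσ0 using hA
  choose τ0 hτ0 using hB
  have hσinj : Function.Injective σ0 := fun j k hjk => ha' (by rw [hσ0, hσ0, hjk])
  have hστ : τ0 = σ0 := by
    funext j
    by_contra hne
    have hmem : Sum.inl s(Sum.inl (a (σ0 j)), Sum.inr (b (τ0 j))) ∈ tileVerts n t i' a b :=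
      Or.inr (Or.inr (Or.inl ⟨σ0 j, τ0 j, fun hh => hne (hh.symm), rfl⟩))
    rw [h] at hmem
    obtain ⟨k, k', hkk, hk, hk'⟩ := mem_cross_iff.1 hmem
    have h1 : a' j = a' k := by rw [hσ0 j, hk]
    have h2 : b' j = b' k' := by rw [hτ0 j, hk']
    exact hkk ((ha' h1) ▸ (hb' h2) ▸ rfl)
  refine ⟨rfl, Equiv.ofBijective σ0 (Finite.injective_iff_bijective.1 hσinj), ?_, ?_⟩
  · funext j; exact hσ0 j
  · funext j; exact (hτ0 j).trans (congrArg b (congrFun hστ j))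

-- real content starts here
abbrev Dat (n t : ℕ) := Col1 n t × (Fin (t+1) → Fin n) × (Fin (t+1) → Fin n)

noncomputable def Phi (n t : ℕ) (d : Dat n t) : Finset (VH1 n t) :=
  (Set.toFinite (tileVerts n t d.1 d.2.1 d.2.2)).toFinset

def DatP (n t : ℕ) (u : VH1 n t) (d : Dat n t) : Prop :=
  Function.Injective d.2.1 ∧ Function.Injective d.2.2 ∧ u ∈ tileVerts n t d.1 d.2.1 d.2.2

open scoped Classical in
noncomputable def Dfin (n t : ℕ) (u : VH1 n t) : Finset (Dat n t) :=
  Finset.univ.filter (DatP n t u)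

lemma coe_Phi (d : Dat n t) : (Phi n t d : Set (VH1 n t)) = tileVerts n t d.1 d.2.1 d.2.2 :=
  Set.Finite.coe_toFinset _

lemma deg_formula (u : VH1 n t) :
    degH1 n t u * (t+1).factorial = (Dfin n t u).card := by
  classical
  have himage : {T : Finset (VH1 n t) | IsTile1 n t T ∧ u ∈ T}
      = ((Dfin n t u).image (Phi n t) : Set (Finset (VH1 n t))) := by
    ext T
    simp only [Set.mem_setOf_eq, coe_image, Set.mem_image, mem_coe, Dfin, mem_filter,
      Finset.mem_univ, true_and]
    constructor
    · rintro ⟨⟨i, a, b, hia, hib, hT⟩, huT⟩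
      refine ⟨(i, a, b), ⟨hia, hib, ?_⟩, ?_⟩
      · rw [← hT]; exact huT
      · apply Finset.coe_injective
        rw [coe_Phi, ← hT]
    · rintro ⟨d, ⟨hia, hib, hu⟩, rfl⟩
      refine ⟨⟨d.1, d.2.1, d.2.2, hia, hib, coe_Phi d⟩, ?_⟩
      rw [← Finset.mem_coe, coe_Phi]; exact hu
  have hdeg : degH1 n t u = ((Dfin n t u).image (Phi n t)).card := by
    rw [degH1, himage, Set.ncard_coe_finset]
  rw [hdeg]
  have hfib : ∀ d₀ ∈ Dfin n t u,
      ((Dfin n t u).filter (fun d => Phi n t d = Phi n t d₀)).card = (t+1).factorial := by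
    intro d₀ hd₀
    simp only [Dfin, mem_filter, Finset.mem_univ, true_and] at hd₀
    obtain ⟨ha₀, hb₀, hu₀⟩ := hd₀
    have : (Finset.univ : Finset (Equiv.Perm (Fin (t+1)))).card
        = ((Dfin n t u).filter (fun d => Phi n t d = Phi n t d₀)).card := by
      refine Finset.card_bij
        (fun σ _ => ((d₀.1, d₀.2.1 ∘ σ, d₀.2.2 ∘ σ) : Dat n t)) ?_ ?_ ?_
      · intro σ _
        simp only [Dfin, mem_filter, Finset.mem_univ, true_and, DatP]
        have hcomp := tileVerts_comp d₀.1 d₀.2.1 d₀.2.2 σ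
        refine ⟨⟨ha₀.comp σ.injective, hb₀.comp σ.injective, ?_⟩, ?_⟩
        · rw [hcomp]; exact hu₀
        · exact Finset.coe_injective (by rw [coe_Phi, coe_Phi]; exact hcomp)
      · intro σ _ σ' _ hEq
        have h1 : d₀.2.1 ∘ σ = d₀.2.1 ∘ σ' := congrArg (fun d : Dat n t => d.2.1) hEq
        ext j
        exact congrArg Fin.val (ha₀ (congrFun h1 j))
      · intro d hd
        simp only [Dfin, mem_filter, Finset.mem_univ, true_and, DatP] at hd
        obtain ⟨⟨ha, hb, hu'⟩, hPhi⟩ := hd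
        have htv : tileVerts n t d.1 d.2.1 d.2.2 = tileVerts n t d₀.1 d₀.2.1 d₀.2.2 := by
          rw [← coe_Phi, ← coe_Phi, hPhi]
        obtain ⟨hi, σ, hA, hB⟩ := tile_eq_exists ha₀ hb₀ ha hb htv.symm
        exact ⟨σ, Finset.mem_univ _, by
          ext <;> simp [hi, hA, hB]⟩
    rw [← this, Finset.card_univ, Fintype.card_perm, Fintype.card_fin]
  calc ((Dfin n t u).image (Phi n t)).card * (t+1).factorial
      = ∑ T ∈ (Dfin n t u).image (Phi n t), (t+1).factorial := by rw [Finset.sum_const, smul_eq_mul]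
    _ = ∑ T ∈ (Dfin n t u).image (Phi n t),
          ((Dfin n t u).filter (fun d => Phi n t d = T)).card := by
        refine Finset.sum_congr rfl ?_
        intro T hT
        obtain ⟨d₀, hd₀, rfl⟩ := Finset.mem_image.1 hT
        exact (hfib d₀ hd₀).symm
    _ = (Dfin n t u).card := (Finset.card_eq_sum_card_image (Phi n t) _).symm

def restrictEquiv {α β : Type*} (P : β → Prop) :
    {a : α → β // Function.Injective a ∧ ∀ j, P (a j)} ≃
      {a : α → Subtype P // Function.Injective a} where
  toFun x := ⟨fun j => ⟨x.1 j, x.2.2 j⟩, fun _ _ h => x.2.1 (congrArg Subtype.val h)⟩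
  invFun x := ⟨fun j => (x.1 j).1, fun _ _ h => x.2 (Subtype.ext h), fun j => (x.1 j).2⟩
  left_inv x := rfl
  right_inv x := rfl

def fixEquiv {α β : Type*} [DecidableEq α] (c : α) (x : β) :
    {a : α → β // Function.Injective a ∧ a c = x} ≃
      {a : {j : α // j ≠ c} → {y : β // y ≠ x} // Function.Injective a} where
  toFun p := ⟨fun j => ⟨p.1 j.1, fun h => j.2 (p.2.1 (h.trans p.2.2.symm))⟩,
    fun j k h => Subtype.ext (p.2.1 (congrArg Subtype.val h))⟩
  invFun q := ⟨fun j => if h : j = c then x else (q.1 ⟨j, h⟩).1, by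
      constructor
      · intro j k h
        by_cases hj : j = c <;> by_cases hk : k = c
        · rw [hj, hk]
        · simp only [hj, dif_pos, dif_neg hk] at h
          exact absurd h.symm (q.1 ⟨k, hk⟩).2
        · simp only [hk, dif_pos, dif_neg hj] at h
          exact absurd h (q.1 ⟨j, hj⟩).2
        · simp only [dif_neg hj, dif_neg hk] at h
          exact congrArg Subtype.val (q.2 (Subtype.ext h))
      · simp⟩
  left_inv p := by
    apply Subtype.ext
    funext j
    by_cases hj : j = c
    · simp only [hj, dif_pos]; exact p.2.2.symm
    · simp only [dif_neg hj]
  right_inv q := by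
    apply Subtype.ext
    funext j
    apply Subtype.ext
    simp only [dif_neg j.2]

open scoped Classical in
lemma card_inj_fun (γ δ : Type*) [Fintype γ] [Fintype δ] :
    Nat.card {a : γ → δ // Function.Injective a}
      = (Fintype.card δ).descFactorial (Fintype.card γ) := by
  rw [Nat.card_congr (Equiv.subtypeInjectiveEquivEmbedding γ δ),
    Nat.card_eq_fintype_card, Fintype.card_embedding_eq]

open scoped Classical in
lemma card_ne {δ : Type*} [Fintype δ] (x : δ) :
    Nat.card {y : δ // y ≠ x} = Fintype.card δ - 1 := by
  rw [Nat.card_eq_fintype_card, Fintype.card_subtype_compl, Fintype.card_subtype_eq]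

open scoped Classical in
lemma card_inj_avoid {m n : ℕ} (s : Finset (Fin n)) :
    Nat.card {a : Fin m → Fin n // Function.Injective a ∧ ∀ j, a j ∉ s}
      = (n - s.card).descFactorial m := by
  rw [Nat.card_congr (restrictEquiv (fun y => y ∉ s)), card_inj_fun,
    Fintype.card_fin]
  congr 1
  rw [Fintype.card_subtype_compl, Fintype.card_coe, Fintype.card_fin]

open scoped Classical in
lemma card_inj_fix {m n : ℕ} (c : Fin (m+1)) (x : Fin n) :
    Nat.card {a : Fin (m+1) → Fin n // Function.Injective a ∧ a c = x}
      = (n - 1).descFactorial m := by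
  rw [Nat.card_congr (fixEquiv c x), card_inj_fun, ← Nat.card_eq_fintype_card,
    ← Nat.card_eq_fintype_card, card_ne, card_ne, Fintype.card_fin,
    Fintype.card_fin, Nat.add_sub_cancel]

open scoped Classical in
lemma card_split {γ : Type*} [Fintype γ] (P Q : γ → Prop) :
    Nat.card {a : γ // P a ∧ Q a} + Nat.card {a : γ // P a ∧ ¬ Q a}
      = Nat.card {a : γ // P a} := by
  simp only [Nat.card_eq_fintype_card, Fintype.card_subtype]
  rw [← Finset.filter_filter, ← Finset.filter_filter,
    Finset.card_filter_add_card_filter_not]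

lemma card_iff_congr {γ : Type*} {P Q : γ → Prop} (h : ∀ a, P a ↔ Q a) :
    Nat.card {a : γ // P a} = Nat.card {a : γ // Q a} :=
  Nat.card_congr (Equiv.subtypeEquivRight h)

open scoped Classical in
lemma card_unique_exists {γ ι : Type*} [Fintype γ] [Fintype ι] (R : ι → γ → Prop)
    (h : ∀ a i i', R i a → R i' a → i = i') :
    Nat.card {a : γ // ∃ i, R i a} = ∑ i : ι, Nat.card {a : γ // R i a} := by
  simp only [Nat.card_eq_fintype_card, Fintype.card_subtype]
  have : Finset.univ.filter (fun a => ∃ i, R i a)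
      = Finset.univ.biUnion (fun i => Finset.univ.filter (R i)) := by
    ext a; simp
  rw [this, Finset.card_biUnion]
  intro i _ i' _ hii
  simp only [Finset.disjoint_left, mem_filter, Finset.mem_univ, true_and]
  intro a ha ha'
  exact hii (h a i i' ha ha')

open scoped Classical in
lemma card_prod_subtype {γ δ : Type*} (P : γ → Prop) (Q : δ → Prop) :
    Nat.card {p : γ × δ // P p.1 ∧ Q p.2} = Nat.card {a // P a} * Nat.card {b // Q b} := by
  rw [Nat.card_congr (Equiv.subtypeProdEquivProd), Nat.card_prod]



lemma desc_id (N k : ℕ) (hN : 1 ≤ N) :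
    N.descFactorial (k+1) = (N-1).descFactorial (k+1) + (k+1) * (N-1).descFactorial k := by
  obtain ⟨M, rfl⟩ : ∃ M, N = M + 1 := ⟨N - 1, by omega⟩
  simp only [Nat.add_sub_cancel]
  rw [Nat.succ_descFactorial_succ, Nat.descFactorial_succ]
  rcases lt_or_ge M k with h | h
  · rw [Nat.descFactorial_of_lt h]; simp
  · have hc : M + 1 = (M - k) + (k + 1) := by omega
    rw [hc, Nat.add_mul]

lemma card_inj_all {n m : ℕ} :
    Nat.card {a : Fin m → Fin n // Function.Injective a} = n.descFactorial m := by
  rw [card_inj_fun, Fintype.card_fin, Fintype.card_fin]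

lemma card_eq_single {γ : Type*} [Fintype γ] [DecidableEq γ] (i₀ : γ) :
    Nat.card {i : γ // i = i₀} = 1 := by
  rw [Nat.card_eq_fintype_card, Fintype.card_subtype_eq]

lemma card_trivial {γ : Type*} [Fintype γ] :
    Nat.card {i : γ // True} = Fintype.card γ := by
  rw [Nat.card_congr (Equiv.subtypeUnivEquiv fun _ => trivial), Nat.card_eq_fintype_card]

variable {n t : ℕ}

lemma cmem1 (hn : 1 ≤ n) (x : Fin n) :
    Nat.card {a : Fin (t+1) → Fin n // Function.Injective a ∧ ∃ j, a j = x}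
      = (t+1) * (n-1).descFactorial t := by
  classical
  have h1 := card_split (fun a : Fin (t+1) → Fin n => Function.Injective a)
    (fun a => ∃ j, a j = x)
  have h2 : Nat.card {a : Fin (t+1) → Fin n // Function.Injective a ∧ ¬ ∃ j, a j = x}
      = (n-1).descFactorial (t+1) := by
    rw [card_iff_congr
      (Q := fun a : Fin (t+1) → Fin n =>
        Function.Injective a ∧ ∀ j, a j ∉ ({x} : Finset (Fin n))) (fun a => by simp),
      card_inj_avoid, Finset.card_singleton]
  rw [h2, card_inj_all, desc_id n t hn] at h1
  exact Nat.add_right_cancel (h1.trans (Nat.add_comm _ _))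

lemma cavoid1 (x : Fin n) :
    Nat.card {a : Fin (t+1) → Fin n // Function.Injective a ∧ ¬ ∃ j, a j = x}
      = (n-1).descFactorial (t+1) := by
  classical
  rw [card_iff_congr
    (Q := fun a : Fin (t+1) → Fin n =>
      Function.Injective a ∧ ∀ j, a j ∉ ({x} : Finset (Fin n))) (fun a => by simp),
    card_inj_avoid, Finset.card_singleton]

lemma cmem2 (s : ℕ) (hn : 2 ≤ n) {x x' : Fin n} (hxx : x ≠ x') :
    Nat.card {a : Fin (s+1+1) → Fin n //
        Function.Injective a ∧ (∃ j, a j = x) ∧ (∃ j, a j = x')}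
      = (s+1+1) * ((s+1) * (n-2).descFactorial s) := by
  classical
  have e1 := card_split
    (fun a : Fin (s+1+1) → Fin n => Function.Injective a ∧ ∃ j, a j = x)
    (fun a => ∃ j, a j = x')
  have r1 : Nat.card {a : Fin (s+1+1) → Fin n //
      (Function.Injective a ∧ ∃ j, a j = x) ∧ ∃ j, a j = x'}
      = Nat.card {a : Fin (s+1+1) → Fin n //
      Function.Injective a ∧ (∃ j, a j = x) ∧ (∃ j, a j = x')} :=
    card_iff_congr (fun a => by tauto)
  have r2 : Nat.card {a : Fin (s+1+1) → Fin n //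
      (Function.Injective a ∧ ∃ j, a j = x) ∧ ¬ ∃ j, a j = x'}
      = Nat.card {a : Fin (s+1+1) → Fin n //
      (Function.Injective a ∧ ¬ ∃ j, a j = x') ∧ ∃ j, a j = x} :=
    card_iff_congr (fun a => by tauto)
  have e2 := card_split
    (fun a : Fin (s+1+1) → Fin n => Function.Injective a ∧ ¬ ∃ j, a j = x')
    (fun a => ∃ j, a j = x)
  have r3 : Nat.card {a : Fin (s+1+1) → Fin n //
      (Function.Injective a ∧ ¬ ∃ j, a j = x') ∧ ¬ ∃ j, a j = x}
      = (n-2).descFactorial (s+1+1) := by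
    rw [card_iff_congr
      (Q := fun a : Fin (s+1+1) → Fin n =>
        Function.Injective a ∧ ∀ j, a j ∉ ({x, x'} : Finset (Fin n)))
      (fun a => by
        simp only [Finset.mem_insert, Finset.mem_singleton, not_or, not_exists]
        constructor
        · rintro ⟨⟨h1, h2⟩, h3⟩; exact ⟨h1, fun j => ⟨h3 j, h2 j⟩⟩
        · rintro ⟨h1, h2⟩; exact ⟨⟨h1, fun j => (h2 j).2⟩, fun j => (h2 j).1⟩),
      card_inj_avoid,
      Finset.card_insert_of_notMem (by simpa using hxx), Finset.card_singleton]
  have r4 : Nat.card {a : Fin (s+1+1) → Fin n //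
      (Function.Injective a ∧ ¬ ∃ j, a j = x')} = (n-1).descFactorial (s+1+1) :=
    cavoid1 x'
  -- compute B := card {(Inj ∧ ¬∃x') ∧ ∃x}
  have hV : (n-1).descFactorial (s+1+1)
      = (n-2).descFactorial (s+1+1) + (s+1+1) * (n-2).descFactorial (s+1) := by
    have := desc_id (n-1) (s+1) (Nat.le_sub_one_of_lt hn)
    simpa [Nat.sub_sub] using this
  have hB : Nat.card {a : Fin (s+1+1) → Fin n //
      (Function.Injective a ∧ ¬ ∃ j, a j = x') ∧ ∃ j, a j = x}
      = (s+1+1) * (n-2).descFactorial (s+1) := by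
    rw [r3, r4, hV] at e2
    exact Nat.add_right_cancel (e2.trans (Nat.add_comm _ _))
  have hK : (n-1).descFactorial (s+1)
      = (n-2).descFactorial (s+1) + (s+1) * (n-2).descFactorial s := by
    have := desc_id (n-1) s (Nat.le_sub_one_of_lt hn)
    simpa [Nat.sub_sub] using this
  have hC : Nat.card {a : Fin (s+1+1) → Fin n //
      Function.Injective a ∧ ∃ j, a j = x} = (s+1+1) * (n-1).descFactorial (s+1) :=
    cmem1 (Nat.one_le_of_lt hn) x
  rw [r1, r2, hB, hC, hK, Nat.mul_add] at e1
  exact Nat.add_right_cancel (e1.trans (Nat.add_comm _ _))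


lemma Dfin_card (u : VH1 n t) :
    (Dfin n t u).card = Nat.card {d : Dat n t // DatP n t u d} := by
  classical
  rw [Nat.card_eq_fintype_card, Fintype.card_subtype, Dfin]

lemma ccross (hn : 1 ≤ n) (x y : Fin n) :
    Nat.card {p : (Fin (t+1) → Fin n) × (Fin (t+1) → Fin n) //
        (Function.Injective p.1 ∧ Function.Injective p.2) ∧
          ∃ j j', j ≠ j' ∧ p.1 j = x ∧ p.2 j' = y}
      = (t+1) * (t * ((n-1).descFactorial t * (n-1).descFactorial t)) := by
  classical
  have eB : Nat.card {p : (Fin (t+1) → Fin n) × (Fin (t+1) → Fin n) //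
      (Function.Injective p.1 ∧ ∃ j, p.1 j = x) ∧ (Function.Injective p.2 ∧ ∃ j, p.2 j = y)}
      = ((t+1) * (n-1).descFactorial t) * ((t+1) * (n-1).descFactorial t) := by
    rw [card_prod_subtype (fun a : Fin (t+1) → Fin n => Function.Injective a ∧ ∃ j, a j = x)
      (fun b : Fin (t+1) → Fin n => Function.Injective b ∧ ∃ j, b j = y),
      cmem1 hn x, cmem1 hn y]
  have split := card_split
    (fun p : (Fin (t+1) → Fin n) × (Fin (t+1) → Fin n) =>
      (Function.Injective p.1 ∧ ∃ j, p.1 j = x) ∧ (Function.Injective p.2 ∧ ∃ j, p.2 j = y))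
    (fun p => ∃ j j', j ≠ j' ∧ p.1 j = x ∧ p.2 j' = y)
  have r1 : Nat.card {p : (Fin (t+1) → Fin n) × (Fin (t+1) → Fin n) //
      ((Function.Injective p.1 ∧ ∃ j, p.1 j = x) ∧ (Function.Injective p.2 ∧ ∃ j, p.2 j = y)) ∧
        ∃ j j', j ≠ j' ∧ p.1 j = x ∧ p.2 j' = y}
      = Nat.card {p : (Fin (t+1) → Fin n) × (Fin (t+1) → Fin n) //
      (Function.Injective p.1 ∧ Function.Injective p.2) ∧
        ∃ j j', j ≠ j' ∧ p.1 j = x ∧ p.2 j' = y} := by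
    refine card_iff_congr fun p => ?_
    constructor
    · rintro ⟨⟨⟨h1, -⟩, ⟨h2, -⟩⟩, hQ⟩; exact ⟨⟨h1, h2⟩, hQ⟩
    · rintro ⟨⟨h1, h2⟩, hQ⟩
      obtain ⟨j, j', hjj, hx, hy⟩ := hQ
      exact ⟨⟨⟨h1, j, hx⟩, ⟨h2, j', hy⟩⟩, j, j', hjj, hx, hy⟩
  have r2 : Nat.card {p : (Fin (t+1) → Fin n) × (Fin (t+1) → Fin n) //
      ((Function.Injective p.1 ∧ ∃ j, p.1 j = x) ∧ (Function.Injective p.2 ∧ ∃ j, p.2 j = y)) ∧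
        ¬ ∃ j j', j ≠ j' ∧ p.1 j = x ∧ p.2 j' = y}
      = Nat.card {p : (Fin (t+1) → Fin n) × (Fin (t+1) → Fin n) //
      ∃ j, (Function.Injective p.1 ∧ p.1 j = x) ∧ (Function.Injective p.2 ∧ p.2 j = y)} := by
    refine card_iff_congr fun p => ?_
    constructor
    · rintro ⟨⟨⟨h1, j, hx⟩, ⟨h2, j', hy⟩⟩, hnQ⟩
      rcases eq_or_ne j j' with rfl | hne
      · exact ⟨j, ⟨h1, hx⟩, ⟨h2, hy⟩⟩
      · exact absurd ⟨j, j', hne, hx, hy⟩ hnQ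
    · rintro ⟨j, ⟨h1, hx⟩, ⟨h2, hy⟩⟩
      refine ⟨⟨⟨h1, j, hx⟩, ⟨h2, j, hy⟩⟩, ?_⟩
      rintro ⟨k, k', hkk, hkx, hky⟩
      exact hkk ((h1 (hkx.trans hx.symm)).trans (h2 (hky.trans hy.symm)).symm)
  have r3 : Nat.card {p : (Fin (t+1) → Fin n) × (Fin (t+1) → Fin n) //
      ∃ j, (Function.Injective p.1 ∧ p.1 j = x) ∧ (Function.Injective p.2 ∧ p.2 j = y)}
      = (t+1) * ((n-1).descFactorial t * (n-1).descFactorial t) := by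
    rw [card_unique_exists
      (fun j (p : (Fin (t+1) → Fin n) × (Fin (t+1) → Fin n)) =>
        (Function.Injective p.1 ∧ p.1 j = x) ∧ (Function.Injective p.2 ∧ p.2 j = y))
      (fun p j j' hj hj' => hj.1.1 (hj.1.2.trans hj'.1.2.symm))]
    have hterm : ∀ j : Fin (t+1),
        Nat.card {p : (Fin (t+1) → Fin n) × (Fin (t+1) → Fin n) //
          (Function.Injective p.1 ∧ p.1 j = x) ∧ (Function.Injective p.2 ∧ p.2 j = y)}
        = (n-1).descFactorial t * (n-1).descFactorial t := by
      intro j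
      rw [card_prod_subtype (fun a : Fin (t+1) → Fin n => Function.Injective a ∧ a j = x)
        (fun b : Fin (t+1) → Fin n => Function.Injective b ∧ b j = y),
        card_inj_fix j x, card_inj_fix j y]
    rw [Finset.sum_congr rfl (fun j _ => hterm j), Finset.sum_const, Finset.card_univ,
      Fintype.card_fin, smul_eq_mul]
  rw [r1, r2, r3, eB] at split
  have hidd : ((t+1) * (n-1).descFactorial t) * ((t+1) * (n-1).descFactorial t)
      = (t+1) * (t * ((n-1).descFactorial t * (n-1).descFactorial t))
        + (t+1) * ((n-1).descFactorial t * (n-1).descFactorial t) := by ring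
  rw [hidd] at split
  exact Nat.add_right_cancel split

lemma count_vx (hn : 1 ≤ n) (i₀ : Col1 n t) (x : Fin n) :
    Nat.card {d : Dat n t // DatP n t (Sum.inr (i₀, Sum.inl x)) d}
      = ((t+1) * (n-1).descFactorial t) * n.descFactorial (t+1) := by
  classical
  have hiff : ∀ d : Dat n t, DatP n t (Sum.inr (i₀, Sum.inl x)) d ↔
      (d.1 = i₀) ∧ ((Function.Injective d.2.1 ∧ ∃ j, d.2.1 j = x) ∧
        Function.Injective d.2.2) := by
    intro d
    unfold DatP
    constructor
    · rintro ⟨h1, h2, h3⟩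
      obtain ⟨hi, hv⟩ := mem_inr_iff.1 h3
      rcases hv with ⟨j, hj⟩ | ⟨j, hj⟩
      · exact ⟨hi.symm, ⟨h1, j, (Sum.inl.inj hj).symm⟩, h2⟩
      · exact absurd hj (by simp)
    · rintro ⟨hi, ⟨h1, j, hj⟩, h2⟩
      exact ⟨h1, h2, mem_inr_iff.2 ⟨hi.symm, Or.inl ⟨j, by rw [hj]⟩⟩⟩
  rw [card_iff_congr hiff,
    card_prod_subtype (fun i : Col1 n t => i = i₀)
      (fun q : (Fin (t+1) → Fin n) × (Fin (t+1) → Fin n) =>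
        (Function.Injective q.1 ∧ ∃ j, q.1 j = x) ∧ Function.Injective q.2),
    card_eq_single, Nat.one_mul,
    card_prod_subtype (fun a : Fin (t+1) → Fin n => Function.Injective a ∧ ∃ j, a j = x)
      (fun b : Fin (t+1) → Fin n => Function.Injective b),
    cmem1 hn x, card_inj_all]

lemma count_vy (hn : 1 ≤ n) (i₀ : Col1 n t) (y : Fin n) :
    Nat.card {d : Dat n t // DatP n t (Sum.inr (i₀, Sum.inr y)) d}
      = n.descFactorial (t+1) * ((t+1) * (n-1).descFactorial t) := by
  classical
  have hiff : ∀ d : Dat n t, DatP n t (Sum.inr (i₀, Sum.inr y)) d ↔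
      (d.1 = i₀) ∧ (Function.Injective d.2.1 ∧
        (Function.Injective d.2.2 ∧ ∃ j, d.2.2 j = y)) := by
    intro d
    unfold DatP
    constructor
    · rintro ⟨h1, h2, h3⟩
      obtain ⟨hi, hv⟩ := mem_inr_iff.1 h3
      rcases hv with ⟨j, hj⟩ | ⟨j, hj⟩
      · exact absurd hj (by simp)
      · exact ⟨hi.symm, h1, h2, j, (Sum.inr.inj hj).symm⟩
    · rintro ⟨hi, h1, h2, j, hj⟩
      exact ⟨h1, h2, mem_inr_iff.2 ⟨hi.symm, Or.inr ⟨j, by rw [hj]⟩⟩⟩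
  rw [card_iff_congr hiff,
    card_prod_subtype (fun i : Col1 n t => i = i₀)
      (fun q : (Fin (t+1) → Fin n) × (Fin (t+1) → Fin n) =>
        Function.Injective q.1 ∧ (Function.Injective q.2 ∧ ∃ j, q.2 j = y)),
    card_eq_single, Nat.one_mul,
    card_prod_subtype (fun a : Fin (t+1) → Fin n => Function.Injective a)
      (fun b : Fin (t+1) → Fin n => Function.Injective b ∧ ∃ j, b j = y),
    cmem1 hn y, card_inj_all]

lemma count_cross (hn : 1 ≤ n) (x y : Fin n) :
    Nat.card {d : Dat n t // DatP n t (Sum.inl s(Sum.inl x, Sum.inr y)) d}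
      = ((n + t - 1) / t) *
          ((t+1) * (t * ((n-1).descFactorial t * (n-1).descFactorial t))) := by
  classical
  have hiff : ∀ d : Dat n t, DatP n t (Sum.inl s(Sum.inl x, Sum.inr y)) d ↔
      (True : Prop) ∧ ((Function.Injective d.2.1 ∧ Function.Injective d.2.2) ∧
        ∃ j j', j ≠ j' ∧ d.2.1 j = x ∧ d.2.2 j' = y) := by
    intro d
    unfold DatP
    constructor
    · rintro ⟨h1, h2, h3⟩
      obtain ⟨j, j', hjj, hx, hy⟩ := mem_cross_iff.1 h3
      exact ⟨trivial, ⟨h1, h2⟩, j, j', hjj, hx.symm, hy.symm⟩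
    · rintro ⟨-, ⟨h1, h2⟩, j, j', hjj, hx, hy⟩
      exact ⟨h1, h2, mem_cross_iff.2 ⟨j, j', hjj, hx.symm, hy.symm⟩⟩
  rw [card_iff_congr hiff,
    card_prod_subtype (fun _ : Col1 n t => (True : Prop))
      (fun q : (Fin (t+1) → Fin n) × (Fin (t+1) → Fin n) =>
        (Function.Injective q.1 ∧ Function.Injective q.2) ∧
          ∃ j j', j ≠ j' ∧ q.1 j = x ∧ q.2 j' = y),
    card_trivial, Fintype.card_fin, ccross hn x y]


lemma count_xx {n : ℕ} (s : ℕ) (hn : 2 ≤ n) {x x' : Fin n} (hxx : x ≠ x') :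
    Nat.card {d : Dat n (s+1) // DatP n (s+1) (Sum.inl s(Sum.inl x, Sum.inl x')) d}
      = ((n + (s+1) - 1) / (s+1)) *
          (((s+1+1) * ((s+1) * (n-2).descFactorial s)) * n.descFactorial (s+1+1)) := by
  classical
  have hiff : ∀ d : Dat n (s+1), DatP n (s+1) (Sum.inl s(Sum.inl x, Sum.inl x')) d ↔
      (True : Prop) ∧ ((Function.Injective d.2.1 ∧
        (∃ j, d.2.1 j = x) ∧ (∃ j, d.2.1 j = x')) ∧ Function.Injective d.2.2) := by
    intro d
    unfold DatP
    constructor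
    · rintro ⟨h1, h2, h3⟩
      obtain ⟨j, j', hjj, hx, hx'⟩ := mem_left_iff.1 h3
      exact ⟨trivial, ⟨h1, ⟨j, hx.symm⟩, ⟨j', hx'.symm⟩⟩, h2⟩
    · rintro ⟨-, ⟨h1, ⟨j, hj⟩, ⟨j', hj'⟩⟩, h2⟩
      have hjj : j ≠ j' := fun h => hxx (by rw [← hj, ← hj', h])
      exact ⟨h1, h2, mem_left_iff.2 ⟨j, j', hjj, hj.symm, hj'.symm⟩⟩
  rw [card_iff_congr hiff,
    card_prod_subtype (fun _ : Col1 n (s+1) => (True : Prop))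
      (fun q : (Fin (s+1+1) → Fin n) × (Fin (s+1+1) → Fin n) =>
        (Function.Injective q.1 ∧ (∃ j, q.1 j = x) ∧ (∃ j, q.1 j = x')) ∧
          Function.Injective q.2),
    card_trivial, Fintype.card_fin,
    card_prod_subtype (fun a : Fin (s+1+1) → Fin n =>
        Function.Injective a ∧ (∃ j, a j = x) ∧ (∃ j, a j = x'))
      (fun b : Fin (s+1+1) → Fin n => Function.Injective b),
    cmem2 s hn hxx, card_inj_all]

lemma count_yy {n : ℕ} (s : ℕ) (hn : 2 ≤ n) {y y' : Fin n} (hyy : y ≠ y') :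
    Nat.card {d : Dat n (s+1) // DatP n (s+1) (Sum.inl s(Sum.inr y, Sum.inr y')) d}
      = ((n + (s+1) - 1) / (s+1)) *
          (n.descFactorial (s+1+1) * ((s+1+1) * ((s+1) * (n-2).descFactorial s))) := by
  classical
  have hiff : ∀ d : Dat n (s+1), DatP n (s+1) (Sum.inl s(Sum.inr y, Sum.inr y')) d ↔
      (True : Prop) ∧ (Function.Injective d.2.1 ∧
        (Function.Injective d.2.2 ∧ (∃ j, d.2.2 j = y) ∧ (∃ j, d.2.2 j = y'))) := by
    intro d
    unfold DatP
    constructor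
    · rintro ⟨h1, h2, h3⟩
      obtain ⟨j, j', hjj, hy, hy'⟩ := mem_right_iff.1 h3
      exact ⟨trivial, h1, h2, ⟨j, hy.symm⟩, ⟨j', hy'.symm⟩⟩
    · rintro ⟨-, h1, h2, ⟨j, hj⟩, ⟨j', hj'⟩⟩
      have hjj : j ≠ j' := fun h => hyy (by rw [← hj, ← hj', h])
      exact ⟨h1, h2, mem_right_iff.2 ⟨j, j', hjj, hj.symm, hj'.symm⟩⟩
  rw [card_iff_congr hiff,
    card_prod_subtype (fun _ : Col1 n (s+1) => (True : Prop))
      (fun q : (Fin (s+1+1) → Fin n) × (Fin (s+1+1) → Fin n) =>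
        Function.Injective q.1 ∧
          (Function.Injective q.2 ∧ (∃ j, q.2 j = y) ∧ (∃ j, q.2 j = y'))),
    card_trivial, Fintype.card_fin,
    card_prod_subtype (fun a : Fin (s+1+1) → Fin n => Function.Injective a)
      (fun b : Fin (s+1+1) → Fin n =>
        Function.Injective b ∧ (∃ j, b j = y) ∧ (∃ j, b j = y')),
    cmem2 s hn hyy, card_inj_all]

lemma pow_lb (x d : ℝ) (h0 : 0 ≤ d) (hdx : d ≤ x) :
    ∀ k : ℕ, x^(k+1) - ((k:ℝ)+1)*d*x^k ≤ (x-d)^(k+1) := by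
  intro k
  induction k with
  | zero => simp
  | succ k ih =>
    have hx0 : (0:ℝ) ≤ x := h0.trans hdx
    have hxd : (0:ℝ) ≤ x - d := by linarith
    have h1 : (x - d)^(k+1+1) = (x-d)^(k+1) * (x-d) := by ring
    have h2 : (x^(k+1) - ((k:ℝ)+1)*d*x^k) * (x-d) ≤ (x-d)^(k+1) * (x-d) :=
      mul_le_mul_of_nonneg_right ih hxd
    have hpk : (0:ℝ) ≤ x^k := pow_nonneg hx0 k
    have h3 : x^(k+1+1) - ((k:ℝ)+1+1)*d*x^(k+1)
        ≤ (x^(k+1) - ((k:ℝ)+1)*d*x^k) * (x-d) := by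
      have hexp : x^(k+1) = x^k * x := by ring
      have hexp2 : x^(k+1+1) = x^k * x * x := by ring
      rw [hexp2, hexp]
      nlinarith [mul_nonneg (mul_nonneg h0 h0) hpk]
    rw [h1]
    push_cast
    linarith [h3.trans h2]

lemma desc_lb' (n e j : ℕ) (hj : j ≤ n) :
    (n - (e+j))^e ≤ (n-j).descFactorial e := by
  have h1 := Nat.pow_sub_le_descFactorial (n-j) e
  refine le_trans (Nat.pow_le_pow_left ?_ e) h1
  omega

lemma desc_ub_cast (m n k : ℕ) (h : m ≤ n) :
    ((m.descFactorial k : ℕ) : ℝ) ≤ (n:ℝ)^k := by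
  have h1 : m.descFactorial k ≤ n^k :=
    (Nat.descFactorial_le_pow m k).trans (Nat.pow_le_pow_left h k)
  exact_mod_cast h1

lemma desc_lb_cast (n e j : ℕ) (hj : j ≤ n) (hen : e + j ≤ n) :
    (n:ℝ)^e - (e:ℝ)*((e:ℝ)+(j:ℝ))*(n:ℝ)^(e-1) ≤ (((n-j).descFactorial e : ℕ) : ℝ) := by
  rcases Nat.eq_zero_or_pos e with rfl | he
  · simp
  obtain ⟨e', rfl⟩ : ∃ e', e = e' + 1 := ⟨e - 1, by omega⟩
  have h1 : ((n - (e'+1+j))^(e'+1) : ℕ) ≤ (n-j).descFactorial (e'+1) := desc_lb' n (e'+1) j hj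
  have h2 : (((n - (e'+1+j) : ℕ):ℝ)) = (n:ℝ) - ((e'+1+j : ℕ):ℝ) := by
    rw [Nat.cast_sub (by omega)]
  have h3 := pow_lb (n:ℝ) ((e'+1+j : ℕ):ℝ) (by positivity) (by exact_mod_cast hen) e'
  have h4 : (((n - (e'+1+j))^(e'+1) : ℕ) : ℝ) ≤ (((n-j).descFactorial (e'+1) : ℕ) : ℝ) := by
    exact_mod_cast h1
  rw [Nat.cast_pow, h2] at h4
  refine le_trans ?_ (h3.trans h4)
  have : (e'+1) - 1 = e' := by omega
  rw [this]
  push_cast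
  nlinarith [pow_nonneg (show (0:ℝ) ≤ (n:ℝ) by positivity) e']


lemma G_est (s : ℕ) (N QT W β : ℝ) (hN : 0 ≤ N) (hβ : 0 ≤ β)
    (hQl : N ≤ QT) (hQu : QT ≤ N + ((s:ℝ)+2))
    (hWl : N^(2*s+4) - β*N^(2*s+3) ≤ W) (hWu : W ≤ N^(2*s+4))
    (hW0 : 0 ≤ N^(2*s+4) - β*N^(2*s+3)) :
    |QT*W - N^(2*s+5)| ≤ (β + ((s:ℝ)+2)) * N^(2*s+4) := by
  have p4 : N^(2*s+5) = N*N^(2*s+4) := by ring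
  have hexp : N*(N^(2*s+4) - β*N^(2*s+3)) = N^(2*s+5) - β*N^(2*s+4) := by ring
  have hexp2 : (N+((s:ℝ)+2))*N^(2*s+4) = N^(2*s+5) + ((s:ℝ)+2)*N^(2*s+4) := by ring
  have hup : QT*W ≤ (N+((s:ℝ)+2))*N^(2*s+4) :=
    mul_le_mul hQu hWu (le_trans hW0 hWl) (by linarith)
  have hlo : N*(N^(2*s+4) - β*N^(2*s+3)) ≤ QT*W :=
    mul_le_mul hQl hWl hW0 (le_trans hN hQl)
  rw [hexp] at hlo
  rw [hexp2] at hup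
  have hp : (0:ℝ) ≤ N^(2*s+4) := pow_nonneg hN _
  rw [abs_le]
  constructor
  · nlinarith [mul_nonneg hβ hp]
  · nlinarith [mul_nonneg hβ hp]

lemma main_est {t : ℕ} (C : ℝ) {n : ℕ} (u : VH1 n t)
    (h : |(((Dfin n t u).card : ℕ) : ℝ) - ((t:ℝ)+1) * (n:ℝ)^(2*t+1)| ≤ C * (n:ℝ)^(2*t)) :
    |(degH1 n t u : ℝ) - (n:ℝ)^(2*t+1)/(t.factorial : ℝ)| ≤ C * (n:ℝ)^(2*t) := by
  have hF : ((t+1).factorial : ℝ) = ((t:ℝ)+1) * (t.factorial : ℝ) := by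
    rw [Nat.factorial_succ]; push_cast; ring
  have hfp : (0:ℝ) < (t.factorial : ℝ) := by exact_mod_cast t.factorial_pos
  have hFp : (0:ℝ) < ((t+1).factorial : ℝ) := by exact_mod_cast (t+1).factorial_pos
  have hcast : (degH1 n t u : ℝ) * ((t+1).factorial : ℝ) = ((Dfin n t u).card : ℝ) := by
    exact_mod_cast congrArg (Nat.cast : ℕ → ℝ) (deg_formula u)
  have hkey : (degH1 n t u : ℝ) - (n:ℝ)^(2*t+1)/(t.factorial : ℝ)
      = ((((Dfin n t u).card : ℕ):ℝ) - ((t:ℝ)+1) * (n:ℝ)^(2*t+1))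
          / ((t+1).factorial : ℝ) := by
    rw [← hcast, hF]
    field_simp
  have hC0 : 0 ≤ C * (n:ℝ)^(2*t) := le_trans (abs_nonneg _) h
  have hF1 : (1:ℝ) ≤ ((t+1).factorial : ℝ) := by
    exact_mod_cast Nat.one_le_iff_ne_zero.2 (t+1).factorial_ne_zero
  rw [hkey, abs_div, abs_of_pos hFp, div_le_iff₀ hFp]
  calc |(((Dfin n t u).card : ℕ):ℝ) - ((t:ℝ)+1) * (n:ℝ)^(2*t+1)|
      ≤ C * (n:ℝ)^(2*t) := h
    _ = C * (n:ℝ)^(2*t) * 1 := by ring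
    _ ≤ C * (n:ℝ)^(2*t) * ((t+1).factorial : ℝ) :=
        mul_le_mul_of_nonneg_left hF1 hC0

lemma qt_bounds (n t : ℕ) (ht : 0 < t) :
    n ≤ ((n+t-1)/t)*t ∧ ((n+t-1)/t)*t ≤ n+t-1 := by
  constructor
  · have h1 := Nat.div_add_mod (n+t-1) t
    have h2 : (n+t-1) % t < t := Nat.mod_lt _ ht
    obtain ⟨P, hP⟩ : ∃ P, t*((n+t-1)/t) = P := ⟨_, rfl⟩
    rw [hP] at h1
    rw [mul_comm, hP]
    omega
  · exact Nat.div_mul_le_self _ _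

lemma Dfin_card_le (n t : ℕ) (ht : 2 ≤ t) (u : VH1 n t) :
    (Dfin n t u).card ≤ n ^ (2*t+3) := by
  classical
  have h1 : (Dfin n t u).card ≤ Fintype.card (Dat n t) := by
    rw [← Finset.card_univ]
    exact Finset.card_le_card (Finset.filter_subset _ _)
  have h2 : Fintype.card (Dat n t) = ((n+t-1)/t) * (n^(t+1) * n^(t+1)) := by
    simp [Fintype.card_fun]
  have hq : (n+t-1)/t ≤ n := by
    rcases Nat.lt_or_ge n 2 with hn | hn
    · interval_cases n
      · simp [Nat.div_eq_of_lt (show t - 1 < t by omega)]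
      · rw [show 1+t-1 = t by omega, Nat.div_self (show 0<t by omega)]
    · have hle : n+t-1 ≤ n*t := by
        have := Nat.add_le_mul hn ht
        omega
      calc (n+t-1)/t ≤ (n*t)/t := Nat.div_le_div_right hle
        _ = n := Nat.mul_div_cancel n (by omega)
  calc (Dfin n t u).card ≤ ((n+t-1)/t) * (n^(t+1) * n^(t+1)) := h2 ▸ h1
    _ ≤ n * (n^(t+1) * n^(t+1)) := Nat.mul_le_mul_right _ hq
    _ = n ^ (2*t+3) := by ring

end S14

set_option maxHeartbeats 3200000 in
/-- In the auxiliary hypergraph `H₁` built from `K_{n,n}` (with `t ≥ 2`), there is a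
constant `c` depending only on `t` such that every vertex `u` of `H₁` satisfies
`|deg_{H₁}(u) − n^{2t+1}/t!| ≤ c·n^{2t}`; in particular `H₁` is essentially `d`-regular
for `d = n^{2t+1}/t!`. -/
theorem stmt14 (t : ℕ) (ht : 2 ≤ t) :
    ∃ c : ℝ, 0 < c ∧ ∀ n : ℕ, 1 ≤ n → ∀ u : VH1 n t, IsVertexH1 n t u →
      |(degH1 n t u : ℝ) - (n : ℝ) ^ (2 * t + 1) / (t.factorial : ℝ)| ≤
        c * (n : ℝ) ^ (2 * t) := by
  obtain ⟨s, rfl⟩ : ∃ s, t = s + 2 := ⟨t - 2, by omega⟩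
  set CN : ℕ := ((2*s+6)^6 + (s+3)*(2*s+6)^2) +
      ((s+3)*(2*((s+2)*(s+3)) + ((s+1)*(s+3) + (s+2))) + 1) with hCN
  refine ⟨((CN : ℕ) : ℝ), by positivity, ?_⟩
  intro n hn u hu
  apply S14.main_est
  have he1 : 2*(s+2)+1 = 2*s+5 := by ring
  have he2 : 2*(s+2) = 2*s+4 := by ring
  rw [he1, he2]
  set N := (n:ℝ) with hNdef
  have hN0 : (0:ℝ) ≤ N := Nat.cast_nonneg n
  have hNp : (0:ℝ) ≤ N^(2*s+4) := pow_nonneg hN0 _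
  have hs0 : (0:ℝ) ≤ (s:ℝ) := Nat.cast_nonneg s
  rcases Nat.lt_or_ge n ((2*s+6)^2) with hsmall | hbig
  · -- small n : crude bound
    have hD0 : (0:ℝ) ≤ ((S14.Dfin n (s+2) u).card : ℝ) := Nat.cast_nonneg _
    have hNB : N ≤ ((2*(s:ℝ)+6))^2 := by
      rw [hNdef]
      exact_mod_cast le_of_lt hsmall
    have hDle : ((S14.Dfin n (s+2) u).card : ℝ) ≤ N^(2*s+7) := by
      have h1 := S14.Dfin_card_le n (s+2) (by omega) u
      have h2 : 2*(s+2)+3 = 2*s+7 := by ring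
      rw [h2] at h1
      rw [hNdef]
      exact_mod_cast h1
    have hD2 : ((S14.Dfin n (s+2) u).card : ℝ) ≤ ((2*(s:ℝ)+6))^6 * N^(2*s+4) := by
      have h3 : N^(2*s+7) = N^3 * N^(2*s+4) := by ring
      have h4 : N^3 ≤ ((2*(s:ℝ)+6))^6 := by
        calc N^3 ≤ (((2*(s:ℝ)+6))^2)^3 := pow_le_pow_left₀ hN0 hNB 3
          _ = ((2*(s:ℝ)+6))^6 := by ring
      calc ((S14.Dfin n (s+2) u).card : ℝ) ≤ N^(2*s+7) := hDle
        _ = N^3 * N^(2*s+4) := h3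
        _ ≤ ((2*(s:ℝ)+6))^6 * N^(2*s+4) := mul_le_mul_of_nonneg_right h4 hNp
    have hM0 : (0:ℝ) ≤ (((s+2:ℕ):ℝ)+1)*N^(2*s+5) := by positivity
    have hM2 : (((s+2:ℕ):ℝ)+1)*N^(2*s+5) ≤ ((s:ℝ)+3)*((2*(s:ℝ)+6))^2 * N^(2*s+4) := by
      have h5 : N^(2*s+5) = N * N^(2*s+4) := by ring
      push_cast
      rw [h5]
      calc ((s:ℝ)+2+1)*(N*N^(2*s+4)) = ((s:ℝ)+3)*N*N^(2*s+4) := by ring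
        _ ≤ ((s:ℝ)+3)*((2*(s:ℝ)+6))^2*N^(2*s+4) := by
            have := mul_le_mul_of_nonneg_right hNB hNp
            nlinarith [this, hNp]
    have hconst : ((2*(s:ℝ)+6))^6 + ((s:ℝ)+3)*((2*(s:ℝ)+6))^2 ≤ ((CN:ℕ):ℝ) := by
      have h6 : ((2*s+6)^6 + (s+3)*(2*s+6)^2 : ℕ) ≤ CN := by
        rw [hCN]; exact Nat.le_add_right _ _
      calc ((2*(s:ℝ)+6))^6 + ((s:ℝ)+3)*((2*(s:ℝ)+6))^2
          = (((2*s+6)^6 + (s+3)*(2*s+6)^2 : ℕ) : ℝ) := by push_cast; ring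
        _ ≤ ((CN:ℕ):ℝ) := Nat.cast_le.2 h6
    rw [abs_le]
    constructor
    · nlinarith [hD0, hM2, hconst, hNp]
    · nlinarith [hM0, hD2, hconst, hNp]
  · -- large n
    have hNbig : ((2*(s:ℝ)+6))^2 ≤ N := by
      rw [hNdef]; exact_mod_cast hbig
    have hn2 : 2 ≤ n := by
      have : (2*s+6)^2 ≥ 2 := by nlinarith
      omega
    have hns3 : s + 3 ≤ n := by nlinarith
    set a1 : ℝ := ((s:ℝ)+2)*((s:ℝ)+3) with ha1
    set a2 : ℝ := ((s:ℝ)+1)*((s:ℝ)+3) with ha2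
    set β : ℝ := 2*a1 + a2 with hβ
    have ha10 : (0:ℝ) ≤ a1 := by rw [ha1]; positivity
    have ha20 : (0:ℝ) ≤ a2 := by rw [ha2]; positivity
    have hβ0 : (0:ℝ) ≤ β := by rw [hβ]; linarith
    have hβN : β ≤ N := by
      rw [hβ, ha1, ha2]
      nlinarith [hNbig, sq_nonneg ((s:ℝ)+3), hs0]
    have ha1N : a1 ≤ N := by
      have h := hβN
      rw [hβ] at h
      linarith
    -- descFactorial bounds
    set k : ℝ := (((n-1).descFactorial (s+2) : ℕ) : ℝ) with hk
    set k2 : ℝ := (((n-2).descFactorial (s+1) : ℕ) : ℝ) with hk2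
    have hk0 : (0:ℝ) ≤ k := by rw [hk]; positivity
    have hk20 : (0:ℝ) ≤ k2 := by rw [hk2]; positivity
    have hk_ub : k ≤ N^(s+2) := by
      rw [hk, hNdef]; exact S14.desc_ub_cast (n-1) n (s+2) (Nat.sub_le _ _)
    have hk2_ub : k2 ≤ N^(s+1) := by
      rw [hk2, hNdef]; exact S14.desc_ub_cast (n-2) n (s+1) (Nat.sub_le _ _)
    have hk_lb : N^(s+2) - a1*N^(s+1) ≤ k := by
      have h1 := S14.desc_lb_cast n (s+2) 1 (by omega) (by omega)
      rw [hk, hNdef, ha1]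
      have h2 : (s+2) - 1 = s+1 := by omega
      rw [h2] at h1
      calc (n:ℝ)^(s+2) - ((s:ℝ)+2)*((s:ℝ)+3)*(n:ℝ)^(s+1)
          = (n:ℝ)^(s+2) - ((s+2:ℕ):ℝ)*(((s+2:ℕ):ℝ)+((1:ℕ):ℝ))*(n:ℝ)^(s+1) := by
            push_cast; ring
        _ ≤ (((n-1).descFactorial (s+2) : ℕ) : ℝ) := h1
    have hk2_lb : N^(s+1) - a2*N^s ≤ k2 := by
      have h1 := S14.desc_lb_cast n (s+1) 2 (by omega) (by omega)
      rw [hk2, hNdef, ha2]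
      have h2 : (s+1) - 1 = s := by omega
      rw [h2] at h1
      calc (n:ℝ)^(s+1) - ((s:ℝ)+1)*((s:ℝ)+3)*(n:ℝ)^s
          = (n:ℝ)^(s+1) - ((s+1:ℕ):ℝ)*(((s+1:ℕ):ℝ)+((2:ℕ):ℝ))*(n:ℝ)^s := by
            push_cast; ring
        _ ≤ (((n-2).descFactorial (s+1) : ℕ) : ℝ) := h1
    have hkl0 : (0:ℝ) ≤ N^(s+2) - a1*N^(s+1) := by
      have h1 : N^(s+2) = N*N^(s+1) := by ring
      have h2 := mul_le_mul_of_nonneg_right ha1N (pow_nonneg hN0 (s+1))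
      linarith
    have hk2l0 : (0:ℝ) ≤ N^(s+1) - a2*N^s := by
      have h1 : N^(s+1) = N*N^s := by ring
      have ha2N : a2 ≤ N := by
        have h := hβN
        rw [hβ] at h
        linarith
      have h2 := mul_le_mul_of_nonneg_right ha2N (pow_nonneg hN0 s)
      linarith
    have hW0 : (0:ℝ) ≤ N^(2*s+4) - β*N^(2*s+3) := by
      have h1 : N^(2*s+4) = N*N^(2*s+3) := by ring
      have h2 := mul_le_mul_of_nonneg_right hβN (pow_nonneg hN0 (2*s+3))
      linarith
    -- bounds on k*k and N*(k*k2)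
    have hWkk_u : k*k ≤ N^(2*s+4) := by
      calc k*k ≤ N^(s+2)*N^(s+2) := mul_le_mul hk_ub hk_ub hk0 (pow_nonneg hN0 _)
        _ = N^(2*s+4) := by ring
    have hWkk_l : N^(2*s+4) - β*N^(2*s+3) ≤ k*k := by
      have h := mul_le_mul hk_lb hk_lb hkl0 hk0
      have hexp : (N^(s+2) - a1*N^(s+1))*(N^(s+2) - a1*N^(s+1))
          = N^(2*s+4) - 2*a1*N^(2*s+3) + a1^2*N^(2*s+2) := by ring
      rw [hexp] at h
      have h1 : (0:ℝ) ≤ a2*N^(2*s+3) := mul_nonneg ha20 (pow_nonneg hN0 _)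
      have h2 : (0:ℝ) ≤ a1^2*N^(2*s+2) := by positivity
      rw [hβ]
      linarith
    have hWkn_u : N*(k*k2) ≤ N^(2*s+4) := by
      have h1 : k*k2 ≤ N^(2*s+3) := by
        calc k*k2 ≤ N^(s+2)*N^(s+1) := mul_le_mul hk_ub hk2_ub hk20 (pow_nonneg hN0 _)
          _ = N^(2*s+3) := by ring
      calc N*(k*k2) ≤ N*N^(2*s+3) := mul_le_mul_of_nonneg_left h1 hN0
        _ = N^(2*s+4) := by ring
    have hWkn_l : N^(2*s+4) - β*N^(2*s+3) ≤ N*(k*k2) := by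
      have h := mul_le_mul hk_lb hk2_lb hk2l0 hk0
      have hexp : (N^(s+2) - a1*N^(s+1))*(N^(s+1) - a2*N^s)
          = N^(2*s+3) - a1*N^(2*s+2) - a2*N^(2*s+2) + a1*a2*N^(2*s+1) := by ring
      rw [hexp] at h
      have h2 := mul_le_mul_of_nonneg_left h hN0
      have hexp2 : N*(N^(2*s+3) - a1*N^(2*s+2) - a2*N^(2*s+2) + a1*a2*N^(2*s+1))
          = N^(2*s+4) - a1*N^(2*s+3) - a2*N^(2*s+3) + a1*a2*N^(2*s+2) := by ring
      rw [hexp2] at h2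
      have h3 : (0:ℝ) ≤ a1*N^(2*s+3) := mul_nonneg ha10 (pow_nonneg hN0 _)
      have h4 : (0:ℝ) ≤ a1*a2*N^(2*s+2) := by positivity
      rw [hβ]
      linarith
    -- q bounds
    set q : ℕ := (n+(s+2)-1)/(s+2) with hq
    have hqb := S14.qt_bounds n (s+2) (by omega)
    have hq_lb : N ≤ (q:ℝ)*((s:ℝ)+2) := by
      rw [hq, hNdef]
      have := hqb.1
      calc (n:ℝ) ≤ ((((n+(s+2)-1)/(s+2))*(s+2) : ℕ) : ℝ) := Nat.cast_le.2 this
        _ = (((n+(s+2)-1)/(s+2) : ℕ):ℝ)*((s:ℝ)+2) := by push_cast; ring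
    have hq_ub : (q:ℝ)*((s:ℝ)+2) ≤ N + ((s:ℝ)+2) := by
      rw [hq, hNdef]
      have h1 := hqb.2
      have h2 : n+(s+2)-1 = n+s+1 := by omega
      rw [h2] at h1
      calc (((n+(s+2)-1)/(s+2) : ℕ):ℝ)*((s:ℝ)+2)
          = ((((n+(s+2)-1)/(s+2))*(s+2) : ℕ) : ℝ) := by push_cast; ring
        _ ≤ ((n+s+1 : ℕ):ℝ) := Nat.cast_le.2 h1
        _ ≤ (n:ℝ) + ((s:ℝ)+2) := by push_cast; linarith
    -- the key estimate
    have KEY : ∀ QT W : ℝ, N ≤ QT → QT ≤ N + ((s:ℝ)+2) →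
        N^(2*s+4) - β*N^(2*s+3) ≤ W → W ≤ N^(2*s+4) →
        |((s:ℝ)+3)*(QT*W) - (((s+2:ℕ):ℝ)+1)*N^(2*s+5)| ≤ ((CN:ℕ):ℝ)*N^(2*s+4) := by
      intro QT W h1 h2 h3 h4
      have hG := S14.G_est s N QT W β hN0 hβ0 h1 h2 h3 h4 hW0
      have hfac : ((s:ℝ)+3)*(QT*W) - (((s+2:ℕ):ℝ)+1)*N^(2*s+5)
          = ((s:ℝ)+3)*((QT*W) - N^(2*s+5)) := by push_cast; ring
      rw [hfac, abs_mul, abs_of_nonneg (by positivity : (0:ℝ) ≤ (s:ℝ)+3)]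
      have hconst : ((s:ℝ)+3)*(β+((s:ℝ)+2)) ≤ ((CN:ℕ):ℝ) := by
        have hnat : ((s+3)*(2*((s+2)*(s+3)) + ((s+1)*(s+3) + (s+2))) : ℕ) ≤ CN := by
          rw [hCN]
          calc ((s+3)*(2*((s+2)*(s+3)) + ((s+1)*(s+3) + (s+2))) : ℕ)
              ≤ (s+3)*(2*((s+2)*(s+3)) + ((s+1)*(s+3) + (s+2))) + 1 :=
                Nat.le_add_right _ _
            _ ≤ _ := Nat.le_add_left _ _
        calc ((s:ℝ)+3)*(β+((s:ℝ)+2))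
            = (((s+3)*(2*((s+2)*(s+3)) + ((s+1)*(s+3) + (s+2))) : ℕ) : ℝ) := by
              rw [hβ, ha1, ha2]; push_cast; ring
          _ ≤ ((CN:ℕ):ℝ) := Nat.cast_le.2 hnat
      calc ((s:ℝ)+3)*|QT*W - N^(2*s+5)|
          ≤ ((s:ℝ)+3)*((β+((s:ℝ)+2))*N^(2*s+4)) :=
            mul_le_mul_of_nonneg_left hG (by positivity)
        _ = (((s:ℝ)+3)*(β+((s:ℝ)+2)))*N^(2*s+4) := by ring
        _ ≤ ((CN:ℕ):ℝ)*N^(2*s+4) := mul_le_mul_of_nonneg_right hconst hNp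
    -- identity v0 = N * k
    have hv0 : ((n.descFactorial (s+3) : ℕ) : ℝ) = N * k := by
      have hnat : n.descFactorial (s+3) = n * (n-1).descFactorial (s+2) := by
        obtain ⟨m, rfl⟩ : ∃ m, n = m+1 := ⟨n-1, by omega⟩
        simpa using Nat.succ_descFactorial_succ m (s+2)
      rw [hk, hNdef, hnat]
      push_cast
      ring
    -- now case on u
    rcases u with sym | ⟨i, v⟩
    · revert hu
      induction sym using Sym2.ind with
      | _ v w =>
        intro hu
        rcases v with x | y <;> rcases w with x' | y'
        · -- X-side pair
          have hxx : x ≠ x' := by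
            intro h
            exact hu (Sym2.mk_isDiag_iff.2 (congrArg Sum.inl h))
          rw [S14.Dfin_card, S14.count_xx (s+1) hn2 hxx]
          have hform : (((((n + (s+1+1) - 1) / (s+1+1)) *
              (((s+1+1+1) * ((s+1+1) * (n-2).descFactorial (s+1))) *
                n.descFactorial (s+1+1+1))) : ℕ) : ℝ)
              = ((s:ℝ)+3)*((((n+(s+2)-1)/(s+2) : ℕ):ℝ)*((s:ℝ)+2)*(N*(k*k2))) := by
            push_cast [hv0, hk2]
            ring
          rw [hform]
          exact KEY _ _ hq_lb hq_ub hWkn_l hWkn_u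
        · -- cross pair x ∈ X, y' ∈ Y
          rw [S14.Dfin_card, S14.count_cross (by omega : 1 ≤ n) x y']
          have hform : ((((n + (s+2) - 1) / (s+2)) *
              (((s+2)+1) * ((s+2) * ((n-1).descFactorial (s+2) *
                (n-1).descFactorial (s+2)))) : ℕ) : ℝ)
              = ((s:ℝ)+3)*((((n+(s+2)-1)/(s+2) : ℕ):ℝ)*((s:ℝ)+2)*(k*k)) := by
            push_cast [hk]
            ring
          rw [hform]
          exact KEY _ _ hq_lb hq_ub hWkk_l hWkk_u
        · -- swapped cross pair
          rw [Sym2.eq_swap]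
          rw [S14.Dfin_card, S14.count_cross (by omega : 1 ≤ n) x' y]
          have hform : ((((n + (s+2) - 1) / (s+2)) *
              (((s+2)+1) * ((s+2) * ((n-1).descFactorial (s+2) *
                (n-1).descFactorial (s+2)))) : ℕ) : ℝ)
              = ((s:ℝ)+3)*((((n+(s+2)-1)/(s+2) : ℕ):ℝ)*((s:ℝ)+2)*(k*k)) := by
            push_cast [hk]
            ring
          rw [hform]
          exact KEY _ _ hq_lb hq_ub hWkk_l hWkk_u
        · -- Y-side pair
          have hyy : y ≠ y' := by
            intro h
            exact hu (Sym2.mk_isDiag_iff.2 (congrArg Sum.inr h))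
          rw [S14.Dfin_card, S14.count_yy (s+1) hn2 hyy]
          have hform : (((((n + (s+1+1) - 1) / (s+1+1)) *
              (n.descFactorial (s+1+1+1) *
                ((s+1+1+1) * ((s+1+1) * (n-2).descFactorial (s+1))))) : ℕ) : ℝ)
              = ((s:ℝ)+3)*((((n+(s+2)-1)/(s+2) : ℕ):ℝ)*((s:ℝ)+2)*(N*(k*k2))) := by
            push_cast [hv0, hk2]
            ring
          rw [hform]
          exact KEY _ _ hq_lb hq_ub hWkn_l hWkn_u
    · rcases v with x | y
      · rw [S14.Dfin_card, S14.count_vx (by omega : 1 ≤ n) i x]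
        have hform : (((((s+2)+1) * (n-1).descFactorial (s+2)) *
            n.descFactorial (s+2+1) : ℕ) : ℝ)
            = ((s:ℝ)+3)*(N*(k*k)) := by
          push_cast [hv0, hk]
          ring
        rw [hform]
        exact KEY _ _ (le_refl N) (by linarith) hWkk_l hWkk_u
      · rw [S14.Dfin_card, S14.count_vy (by omega : 1 ≤ n) i y]
        have hform : (((n.descFactorial (s+2+1) *
            (((s+2)+1) * (n-1).descFactorial (s+2))) : ℕ) : ℝ)
            = ((s:ℝ)+3)*(N*(k*k)) := by
          push_cast [hv0, hk]
          ring
        rw [hform]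
        exact KEY _ _ (le_refl N) (by linarith) hWkk_l hWkk_u
end

section
/- In the auxiliary hypergraph H1 built from K_{n,n} (with t ≥ 2), there is a constant c depending only on t such that every pair of distinct vertices of H1 is contained in at most c·n^{2t} tiles of H1; in particular, Δ₂(H1) ≤ d^{1−ε} for d = n^{2t+1}/t!, any ε ∈ (0, 1/(2t+2)), and sufficiently large n. -/
open Finset

/-- The codegree of a pair of vertices `u, v` of `H₁`: the number of tiles of `H₁`
containing both `u` and `v`. -/
noncomputable def codegH1 (n t : ℕ) (u v : VH1 n t) : ℕ :=
  {T : Finset (VH1 n t) | IsTile1 n t T ∧ u ∈ T ∧ v ∈ T}.ncard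

/-! A tile is determined by its colour `i` and the vertex map `Sum.map a b` of its underlying
graph, a map from a set of `2t + 2` indices into the `2n` vertices of `K_{n,n}`. Two distinct
vertices of `H₁` together either force at least three vertices of `K_{n,n}` into the image of
that map, or force two of them and the colour, or are incompatible (copies in different `V_i`).
Maps hitting `k` prescribed vertices number at most `(2t+2)^k (2n)^(2t+2-k)`, and there are at
most `n` colours, so every codegree is `O(n^{2t})`. Since `ε < 1/(2t+2) < 1/(2t+1)`, the power
`(n^{2t+1}/t!)^{1-ε}` eventually dominates any fixed multiple of `n^{2t}`. -/

theorem card_filter_subset_image_le {ι β : Type*} [Fintype ι] [DecidableEq ι] [Fintype β]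
    [DecidableEq β] (S : Finset β) :
    #{g : ι → β | S ⊆ univ.image g} ≤
      Fintype.card ι ^ #S * Fintype.card β ^ (Fintype.card ι - #S) := by
  set fiber : (S ↪ ι) → Finset (ι → β) := fun φ => {g | ∀ s : S, g (φ s) = s}
  have hcover : ({g : ι → β | S ⊆ univ.image g} : Finset _) ⊆ univ.biUnion fiber := by
    intro g hg
    rw [mem_filter] at hg
    have hpre : ∀ s : S, ∃ j, g j = s := fun s => by simpa using hg.2 s.2
    choose φ hφ using hpre
    have hφinj : Function.Injective φ := fun s s' h => Subtype.ext (by rw [← hφ s, ← hφ s', h])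
    exact mem_biUnion.2 ⟨⟨φ, hφinj⟩, mem_univ _, by simpa [fiber] using hφ⟩
  have hfiber : ∀ φ : S ↪ ι, #(fiber φ) ≤ Fintype.card β ^ (Fintype.card ι - #S) := by
    intro φ
    -- a function in the fiber is determined by its values off the range of `φ`
    have hinj : Set.InjOn (fun (g : ι → β) (j : ↥(univ.map φ)ᶜ) => g j) (fiber φ) := by
      intro g hg g' hg' h
      simp only [coe_filter, mem_univ, true_and, fiber] at hg hg'
      funext j
      by_cases hj : j ∈ univ.map φ
      · obtain ⟨s, -, rfl⟩ := mem_map.1 hj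
        rw [hg, hg']
      · exact congrFun h ⟨j, mem_compl.2 hj⟩
    calc #(fiber φ) ≤ #(univ : Finset (↥(univ.map φ)ᶜ → β)) :=
          card_le_card_of_injOn _ (fun _ _ => mem_coe.2 (mem_univ _)) hinj
      _ = Fintype.card β ^ (Fintype.card ι - #S) := by
          rw [card_univ, Fintype.card_fun, Fintype.card_coe, card_compl, card_map, card_univ,
            Fintype.card_coe]
  calc #{g : ι → β | S ⊆ univ.image g}
      ≤ ∑ φ : S ↪ ι, #(fiber φ) := (card_le_card hcover).trans card_biUnion_le
    _ ≤ ∑ _φ : S ↪ ι, Fintype.card β ^ (Fintype.card ι - #S) := sum_le_sum fun φ _ => hfiber φ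
    _ ≤ Fintype.card ι ^ #S * Fintype.card β ^ (Fintype.card ι - #S) := by
        rw [sum_const, card_univ, smul_eq_mul, Fintype.card_embedding_eq, Fintype.card_coe]
        exact Nat.mul_le_mul_right _ (Nat.descFactorial_le_pow _ _)

/- The vertices of `K_{n,n}` that every tile containing `u` must use, and the colours such a
tile may have. -/
def pins {n t : ℕ} : VH1 n t → Finset (Vtx n)
  | Sum.inl s => s.toFinset
  | Sum.inr (_, w) => {w}

def colors {n t : ℕ} : VH1 n t → Finset (Col1 n t)
  | Sum.inl _ => univ
  | Sum.inr (i, _) => {i}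

lemma mem_colors_and_pins_subset_of_mem_tileVerts {n t : ℕ} {i : Col1 n t}
    {a b : Fin (t + 1) → Fin n} {u : VH1 n t} (hu : u ∈ tileVerts n t i a b) :
    i ∈ colors u ∧ pins u ⊆ univ.image (Sum.map a b) := by
  rcases hu with ⟨j, rfl⟩ | ⟨j, rfl⟩ | ⟨j, j', -, rfl⟩ | ⟨j, j', -, rfl⟩ | ⟨j, j', -, rfl⟩ <;>
    simp only [colors, pins, Sym2.toFinset_mk_eq, mem_singleton, mem_univ, true_and,
      singleton_subset_iff, insert_subset_iff, mem_image] <;>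
    first
    | exact ⟨Sum.inl j, rfl⟩ | exact ⟨Sum.inr j, rfl⟩
    | exact ⟨⟨Sum.inl j, rfl⟩, ⟨Sum.inr j', rfl⟩⟩ | exact ⟨⟨Sum.inl j, rfl⟩, ⟨Sum.inl j', rfl⟩⟩
    | exact ⟨⟨Sum.inr j, rfl⟩, ⟨Sum.inr j', rfl⟩⟩

lemma codegH1_le_card_colors_mul {n t : ℕ} {u v : VH1 n t} {S : Finset (Vtx n)}
    (hS : S ⊆ pins u ∪ pins v) :
    codegH1 n t u v ≤ #(colors u ∩ colors v) * ((2 * t + 2) ^ #S * (2 * n) ^ (2 * t + 2 - #S)) := by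
  set params : Set (Col1 n t × (Fin (t + 1) → Fin n) × (Fin (t + 1) → Fin n)) :=
    {p | u ∈ tileVerts n t p.1 p.2.1 p.2.2 ∧ v ∈ tileVerts n t p.1 p.2.1 p.2.2}
  have htiles : {T : Finset (VH1 n t) | IsTile1 n t T ∧ u ∈ T ∧ v ∈ T} ⊆
      (fun p => (Set.toFinite (tileVerts n t p.1 p.2.1 p.2.2)).toFinset) '' params := by
    rintro T ⟨⟨i, a, b, -, -, hT⟩, hu, hv⟩
    refine ⟨(i, a, b), ⟨?_, ?_⟩, Finset.coe_injective (by simpa using hT.symm)⟩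
    · rw [← hT]; exact hu
    · rw [← hT]; exact hv
  have hencode : params.ncard ≤
      #((colors u ∩ colors v) ×ˢ
        ({g : Fin (t + 1) ⊕ Fin (t + 1) → Vtx n | S ⊆ univ.image g} : Finset _)) := by
    rw [← Set.ncard_coe_finset]
    refine Set.ncard_le_ncard_of_injOn (fun p => (p.1, Sum.map p.2.1 p.2.2)) ?_ ?_ (Set.toFinite _)
    · rintro ⟨i, a, b⟩ ⟨hu, hv⟩
      obtain ⟨hiu, hpu⟩ := mem_colors_and_pins_subset_of_mem_tileVerts hu
      obtain ⟨hiv, hpv⟩ := mem_colors_and_pins_subset_of_mem_tileVerts hv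
      simpa using ⟨⟨hiu, hiv⟩, hS.trans (union_subset hpu hpv)⟩
    · rintro ⟨i, a, b⟩ - ⟨i', a', b'⟩ - h
      simp only [Prod.mk.injEq] at h ⊢
      refine ⟨h.1, funext fun j => ?_, funext fun j => ?_⟩
      · simpa using congrFun h.2 (Sum.inl j)
      · simpa using congrFun h.2 (Sum.inr j)
  calc codegH1 n t u v ≤ params.ncard :=
        (Set.ncard_le_ncard htiles (Set.toFinite _)).trans (Set.ncard_image_le (Set.toFinite _))
    _ ≤ _ := hencode
    _ ≤ _ := by
        rw [card_product]
        refine Nat.mul_le_mul_left _ ((card_filter_subset_image_le S).trans_eq ?_)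
        simp only [Fintype.card_sum, Fintype.card_fin]
        ring_nf

lemma card_col1_le {n t : ℕ} (ht : 1 ≤ t) : Fintype.card (Col1 n t) ≤ n := by
  rw [Fintype.card_fin, Nat.div_le_iff_le_mul_add_pred (by omega)]
  have : n ≤ t * n := Nat.le_mul_of_pos_left n ht
  omega

lemma three_le_card_toFinset_union {α : Type*} [DecidableEq α] {s s' : Sym2 α}
    (hs : ¬ s.IsDiag) (hs' : ¬ s'.IsDiag) (hne : s ≠ s') :
    3 ≤ #(s.toFinset ∪ s'.toFinset) := by
  have hcard := Sym2.card_toFinset_of_not_isDiag s hs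
  have hcard' := Sym2.card_toFinset_of_not_isDiag s' hs'
  have hinter : #(s.toFinset ∩ s'.toFinset) ≤ 1 := by
    by_contra! h
    have h₁ :=
      eq_of_subset_of_card_le (inter_subset_left : s.toFinset ∩ s'.toFinset ⊆ _) (by omega)
    have h₂ :=
      eq_of_subset_of_card_le (inter_subset_right : s.toFinset ∩ s'.toFinset ⊆ _) (by omega)
    exact hne (Sym2.ext fun x => by rw [← Sym2.mem_toFinset, ← Sym2.mem_toFinset, ← h₁, h₂])
  have := card_union_add_card_inter s.toFinset s'.toFinset
  omega

lemma card_colors_inter_eq_zero_or_pins_large {n t : ℕ} {u v : VH1 n t}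
    (hu : IsVertexH1 n t u) (hv : IsVertexH1 n t v) (huv : u ≠ v) :
    colors u ∩ colors v = ∅ ∨ (#(colors u ∩ colors v) ≤ 1 ∧ 2 ≤ #(pins u ∪ pins v)) ∨
      3 ≤ #(pins u ∪ pins v) := by
  rcases u with s | ⟨i, w⟩ <;> rcases v with s' | ⟨i', w'⟩
  · exact Or.inr (Or.inr (three_le_card_toFinset_union hu hv (fun h => huv (h ▸ rfl))))
  · refine Or.inr (Or.inl ⟨(card_le_card inter_subset_right).trans (by simp [colors]), ?_⟩)
    exact (Sym2.card_toFinset_of_not_isDiag s hu).symm.le.trans (card_le_card subset_union_left)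
  · refine Or.inr (Or.inl ⟨(card_le_card inter_subset_left).trans (by simp [colors]), ?_⟩)
    exact (Sym2.card_toFinset_of_not_isDiag s' hv).symm.le.trans (card_le_card subset_union_right)
  · by_cases hi : i = i'
    · subst hi
      have hw : w ≠ w' := fun h => huv (h ▸ rfl)
      refine Or.inr (Or.inl ⟨(card_le_card inter_subset_left).trans (by simp [colors]), ?_⟩)
      simp [pins, card_pair hw]
    · exact Or.inl (singleton_inter_of_notMem (by simpa [colors] using hi))

lemma codegH1_le {n t : ℕ} (ht : 1 ≤ t) {u v : VH1 n t} (hu : IsVertexH1 n t u)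
    (hv : IsVertexH1 n t v) (huv : u ≠ v) :
    codegH1 n t u v ≤ (2 * t + 2) ^ 3 * 2 ^ (2 * t) * n ^ (2 * t) := by
  obtain ⟨k, rfl⟩ : ∃ k, t = k + 1 := ⟨t - 1, by omega⟩
  rcases card_colors_inter_eq_zero_or_pins_large hu hv huv with h0 | ⟨h1, h2⟩ | h3
  · have := codegH1_le_card_colors_mul (empty_subset (pins u ∪ pins v))
    rw [h0, card_empty, zero_mul] at this
    omega
  · obtain ⟨S, hS, hS2⟩ := exists_subset_card_eq h2
    calc codegH1 n (k + 1) u v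
        ≤ 1 * ((2 * (k + 1) + 2) ^ 2 * (2 * n) ^ (2 * (k + 1))) := by
          have := codegH1_le_card_colors_mul hS
          rw [hS2, Nat.add_sub_cancel] at this
          exact this.trans (Nat.mul_le_mul_right _ h1)
      _ ≤ (2 * (k + 1) + 2) ^ 3 * 2 ^ (2 * (k + 1)) * n ^ (2 * (k + 1)) := by
          rw [one_mul, mul_pow, ← mul_assoc]
          gcongr <;> omega
  · obtain ⟨S, hS, hS3⟩ := exists_subset_card_eq h3
    have hI : #(colors u ∩ colors v) ≤ n := (card_le_univ _).trans (card_col1_le ht)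
    calc codegH1 n (k + 1) u v
        ≤ n * ((2 * (k + 1) + 2) ^ 3 * (2 * n) ^ (2 * k + 1)) := by
          have := codegH1_le_card_colors_mul hS
          rw [hS3, show 2 * (k + 1) + 2 - 3 = 2 * k + 1 by omega] at this
          exact this.trans (Nat.mul_le_mul_right _ hI)
      _ ≤ n * ((2 * (k + 1) + 2) ^ 3 * (2 * n) ^ (2 * k + 1)) * 2 :=
          Nat.le_mul_of_pos_right _ two_pos
      _ = (2 * (k + 1) + 2) ^ 3 * 2 ^ (2 * (k + 1)) * n ^ (2 * (k + 1)) := by ring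

open Filter in
lemma eventually_mul_pow_le_div_rpow (C : ℝ) {F ε : ℝ} (hF : 0 < F) {m : ℕ}
    (hε : (m + 1 : ℝ) * ε < 1) :
    ∀ᶠ x : ℝ in atTop, C * x ^ m ≤ (x ^ (m + 1) / F) ^ (1 - ε) := by
  set δ : ℝ := 1 - (m + 1) * ε
  have hδ : 0 < δ := by linarith
  filter_upwards [eventually_gt_atTop 0,
    (tendsto_rpow_atTop hδ).eventually_ge_atTop (C * F ^ (1 - ε))] with x hx hxδ
  have hsplit : (x ^ (m + 1) / F) ^ (1 - ε) = x ^ m * x ^ δ / F ^ (1 - ε) := by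
    rw [Real.div_rpow (by positivity) hF.le, ← Real.rpow_natCast x (m + 1),
      ← Real.rpow_mul hx.le, ← Real.rpow_natCast x m, ← Real.rpow_add hx]
    congr 2
    push_cast
    ring
  rw [hsplit, le_div_iff₀ (by positivity)]
  calc C * x ^ m * F ^ (1 - ε) = x ^ m * (C * F ^ (1 - ε)) := by ring
    _ ≤ x ^ m * x ^ δ := by gcongr

/-- In the auxiliary hypergraph `H₁` built from `K_{n,n}` (with `t ≥ 2`), there is a
constant `c` depending only on `t` such that every pair of distinct vertices of `H₁` lies
in at most `c·n^{2t}` tiles; in particular `Δ₂(H₁) ≤ d^{1−ε}` for `d = n^{2t+1}/t!`,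
any `ε ∈ (0, 1/(2t+2))` and sufficiently large `n`. -/
theorem stmt15 (t : ℕ) (ht : 2 ≤ t) :
    (∃ c : ℝ, 0 < c ∧ ∀ n : ℕ, 1 ≤ n → ∀ u v : VH1 n t,
      IsVertexH1 n t u → IsVertexH1 n t v → u ≠ v →
        (codegH1 n t u v : ℝ) ≤ c * (n : ℝ) ^ (2 * t)) ∧
    ∀ ε : ℝ, 0 < ε → ε < 1 / (2 * t + 2) → ∃ n₀ : ℕ, ∀ n : ℕ, n₀ ≤ n →
      ∀ u v : VH1 n t, IsVertexH1 n t u → IsVertexH1 n t v → u ≠ v →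
        (codegH1 n t u v : ℝ) ≤
          ((n : ℝ) ^ (2 * t + 1) / (t.factorial : ℝ)) ^ ((1 : ℝ) - ε) := by
  have hcodeg : ∀ n : ℕ, ∀ u v : VH1 n t, IsVertexH1 n t u → IsVertexH1 n t v → u ≠ v →
      (codegH1 n t u v : ℝ) ≤ ((2 * t + 2) ^ 3 * 2 ^ (2 * t) : ℕ) * (n : ℝ) ^ (2 * t) :=
    fun n u v hu hv huv => by exact_mod_cast codegH1_le (by omega) hu hv huv
  refine ⟨⟨_, by positivity, fun n _ => hcodeg n⟩, fun ε hε₀ hε => ?_⟩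
  have hε' : ((2 * t : ℕ) + 1 : ℝ) * ε < 1 := by
    rw [lt_div_iff₀ (by positivity)] at hε
    push_cast
    linarith
  obtain ⟨n₀, hn₀⟩ := Filter.eventually_atTop.1 <| tendsto_natCast_atTop_atTop.eventually <|
    eventually_mul_pow_le_div_rpow _ (Nat.cast_pos.2 t.factorial_pos) hε'
  exact ⟨n₀, fun n hn u v hu hv huv => (hcodeg n u v hu hv huv).trans (hn₀ n hn)⟩
end
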